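/- arXiv:2311.06848 — 11 statements merged into one kernel-verified Lean document; each statement's English description precedes it below -/
import Mathlib

section
/- Let c > 0 and r ∈ (0,1). Suppose V : [0,∞) → ℝ is differentiable, V(t) ≥ 0 for all t ≥ 0, and V′(t) ≤ −c·V(t)^r for all t ≥ 0. Then V(t) = 0 for all t ≥ V(0)^{1−r}/(c(1−r)). (Scalar Lyapunov comparison form of finite-time stability, Lemma 2(1).) -/
/-- Scalar Lyapunov comparison form of finite-time stability (Lemma 2(1)). -/
theorem finite_time_lyapunov_comparison
    (c r : ℝ) (hc : 0 < c) (hr : r ∈ Set.Ioo (0:ℝ) 1)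
    (V V' : ℝ → ℝ)
    (hV : ∀ t ≥ (0:ℝ), HasDerivAt V (V' t) t)
    (hVnonneg : ∀ t ≥ (0:ℝ), 0 ≤ V t)
    (hV' : ∀ t ≥ (0:ℝ), V' t ≤ -c * (V t) ^ r) :
    ∀ t : ℝ, (V 0) ^ (1 - r) / (c * (1 - r)) ≤ t → V t = 0 := by
  obtain ⟨hr0, hr1⟩ := hr
  have hp0 : 0 < 1 - r := by linarith
  have hcp : 0 < c * (1 - r) := by positivity
  intro t ht
  by_contra hne
  have hT0 : 0 ≤ V 0 ^ (1 - r) / (c * (1 - r)) :=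
    div_nonneg (Real.rpow_nonneg (hVnonneg 0 le_rfl) _) hcp.le
  have ht0 : 0 ≤ t := le_trans hT0 ht
  have hVt : 0 < V t := lt_of_le_of_ne (hVnonneg t ht0) (Ne.symm hne)
  -- V is antitone on [0, ∞)
  have hanti : AntitoneOn V (Set.Ici 0) := by
    apply antitoneOn_of_deriv_nonpos (convex_Ici 0)
    · exact fun s hs => (hV s hs).continuousAt.continuousWithinAt
    · intro s hs
      rw [interior_Ici] at hs
      exact (hV s hs.le).differentiableAt.differentiableWithinAt
    · intro s hs
      rw [interior_Ici] at hs
      rw [(hV s hs.le).deriv]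
      have h1 := hV' s hs.le
      have h2 : 0 ≤ V s ^ r := Real.rpow_nonneg (hVnonneg s hs.le) r
      nlinarith
  have hVpos : ∀ s ∈ Set.Icc (0:ℝ) t, 0 < V s := by
    intro s hs
    exact lt_of_lt_of_le hVt (hanti hs.1 ht0 hs.2)
  -- g s = V s ^ (1-r) + s * (c * (1-r)) is antitone on [0, t]
  have hg : AntitoneOn (fun s => V s ^ (1 - r) + s * (c * (1 - r))) (Set.Icc 0 t) := by
    apply antitoneOn_of_deriv_nonpos (convex_Icc 0 t)
    · apply ContinuousOn.add
      · intro s hs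
        exact ((hV s hs.1).continuousAt.rpow_const
          (Or.inl (hVpos s hs).ne')).continuousWithinAt
      · exact (continuous_mul_right _).continuousOn
    · intro s hs
      rw [interior_Icc] at hs
      have hs' : s ∈ Set.Icc (0:ℝ) t := ⟨hs.1.le, hs.2.le⟩
      exact (((hV s hs.1.le).rpow_const (Or.inl (hVpos s hs').ne')).add
        (hasDerivAt_mul_const (c * (1 - r)))).differentiableAt.differentiableWithinAt
    · intro s hs
      rw [interior_Icc] at hs
      have hs' : s ∈ Set.Icc (0:ℝ) t := ⟨hs.1.le, hs.2.le⟩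
      have hVs : 0 < V s := hVpos s hs'
      have hD : HasDerivAt (fun s => V s ^ (1 - r) + s * (c * (1 - r)))
          (V' s * (1 - r) * V s ^ (1 - r - 1) + c * (1 - r)) s :=
        ((hV s hs.1.le).rpow_const (Or.inl hVs.ne')).add
          (hasDerivAt_mul_const (c * (1 - r)))
      rw [hD.deriv]
      have h1 := hV' s hs.1.le
      have hpow : V s ^ r * V s ^ (1 - r - 1) = 1 := by
        rw [← Real.rpow_add hVs]
        norm_num
      have hpownn : 0 < V s ^ (1 - r - 1) := Real.rpow_pos_of_pos hVs _
      have h2 : V' s * V s ^ (1 - r - 1) ≤ -c := by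
        have := mul_le_mul_of_nonneg_right h1 hpownn.le
        nlinarith
      nlinarith
  have hineq := hg (Set.left_mem_Icc.2 ht0) (Set.right_mem_Icc.2 ht0) ht0
  simp only [zero_mul, add_zero] at hineq
  have hV0 : V 0 ^ (1 - r) ≤ t * (c * (1 - r)) := by
    have := (div_le_iff₀ hcp).mp ht
    linarith
  have hVtpow : 0 < V t ^ (1 - r) := Real.rpow_pos_of_pos hVt _
  linarith
end

section
/- Let c₁, c₂ > 0, k > 0 and r₁, r₂ > 0 with r₁·k < 1 and r₂·k > 1. Suppose V : [0,∞) → ℝ is differentiable, V(t) ≥ 0 for all t ≥ 0, and V′(t) ≤ −(c₁·V(t)^{r₁} + c₂·V(t)^{r₂})^k for all t ≥ 0. Then V(t) = 0 for all t ≥ 1/(c₁^k·(1−r₁k)) + 1/(c₂^k·(r₂k−1)); in particular the settling time is bounded uniformly in the initial value V(0). (Scalar Lyapunov comparison form of fixed-time stability, Lemma 2(2).) -/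
/-!
Along a positive solution of `V' ≤ -c V^q` with `q ≠ 1`, the quantity `V^(1-q)/(1-q) + c t` is
nonincreasing, its derivative being `V' V^(-q) + c`. For `q = r₂k > 1` this makes `V^(1-q)` grow at
rate at least `c₂^k (q - 1)` while `V > 1`; since `V^(1-q) < 1` there, `V` drops to `1` within time
`1/(c₂^k (r₂k - 1))`, whatever `V(0)` is. From then on, `q = r₁k < 1` makes `V^(1-q) ≤ 1` decrease
at rate at least `c₁^k (1 - q)`, so it reaches `0` within the further time `1/(c₁^k (1 - r₁k))`.
-/

open Set Real

theorem Convex.antitoneOn_of_hasDerivAt_nonpos {D : Set ℝ} (hD : Convex ℝ D) {f f' : ℝ → ℝ}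
    (hf : ∀ x ∈ D, HasDerivAt f (f' x) x) (hf' : ∀ x ∈ D, f' x ≤ 0) : AntitoneOn f D :=
  antitoneOn_of_hasDerivWithinAt_nonpos hD (fun x hx ↦ (hf x hx).continuousAt.continuousWithinAt)
    (fun x hx ↦ (hf x (interior_subset hx)).hasDerivWithinAt) fun x hx ↦ hf' x (interior_subset hx)

theorem antitoneOn_rpow_div_add_mul_of_hasDerivAt_le_neg_rpow {V V' : ℝ → ℝ} {s : Set ℝ}
    {c q : ℝ} (hs : Convex ℝ s) (hq : q ≠ 1) (hV : ∀ t ∈ s, HasDerivAt V (V' t) t)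
    (hpos : ∀ t ∈ s, 0 < V t) (hV' : ∀ t ∈ s, V' t ≤ -(c * V t ^ q)) :
    AntitoneOn (fun t ↦ V t ^ (1 - q) / (1 - q) + c * t) s := by
  have hq' : 1 - q ≠ 0 := sub_ne_zero.2 hq.symm
  refine hs.antitoneOn_of_hasDerivAt_nonpos (f' := fun t ↦ V' t * V t ^ (-q) + c)
    (fun t ht ↦ ?_) fun t ht ↦ ?_
  · refine ((((hV t ht).rpow_const (Or.inl (hpos t ht).ne')).div_const (1 - q)).fun_add
      ((hasDerivAt_id' t).const_mul c)).congr_deriv ?_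
    rw [sub_sub_cancel_left]
    field_simp
  · have hVq : V t ^ q * V t ^ (-q) = 1 := by
      rw [← rpow_add (hpos t ht), add_neg_cancel, rpow_zero]
    have := mul_le_mul_of_nonneg_right (hV' t ht) (rpow_nonneg (hpos t ht).le (-q))
    linear_combination this - c * hVq

theorem le_one_of_hasDerivAt_le_neg_rpow_of_one_lt {V V' : ℝ → ℝ} {a b c q : ℝ} (hq : 1 < q)
    (hc : 0 < c) (hT : 1 / (c * (q - 1)) ≤ b - a) (hanti : AntitoneOn V (Icc a b))
    (hV : ∀ t ∈ Icc a b, HasDerivAt V (V' t) t)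
    (hV' : ∀ t ∈ Icc a b, V' t ≤ -(c * V t ^ q)) :
    V b ≤ 1 := by
  by_contra! hb
  have hq₁ : 0 < q - 1 := sub_pos.2 hq
  have hab : a ≤ b := by linarith [show 0 < 1 / (c * (q - 1)) by positivity]
  have hpos : ∀ t ∈ Icc a b, 0 < V t := fun t ht ↦
    zero_lt_one.trans (hb.trans_le (hanti ht (right_mem_Icc.2 hab) ht.2))
  have hdecay := antitoneOn_rpow_div_add_mul_of_hasDerivAt_le_neg_rpow (convex_Icc a b) hq.ne'
    hV hpos hV' (left_mem_Icc.2 hab) (right_mem_Icc.2 hab) hab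
  have hone : 1 ≤ c * (q - 1) * (b - a) := by
    rwa [div_le_iff₀ (by positivity), mul_comm] at hT
  have hVa : 0 < V a ^ (1 - q) := rpow_pos_of_pos (hpos a (left_mem_Icc.2 hab)) _
  have hVb : V b ^ (1 - q) < 1 := rpow_lt_one_of_one_lt_of_neg hb (by linarith)
  have hgain : V a ^ (1 - q) + c * (q - 1) * (b - a) ≤ V b ^ (1 - q) := by
    have h := mul_le_mul_of_nonpos_right hdecay (by linarith : 1 - q ≤ 0)
    simp only [add_mul, div_mul_cancel₀ _ (by linarith : 1 - q ≠ 0)] at h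
    linarith
  linarith

theorem eq_zero_of_hasDerivAt_le_neg_rpow_of_lt_one {V V' : ℝ → ℝ} {a b c q : ℝ} (hq : q < 1)
    (hc : 0 < c) (hT : 1 / (c * (1 - q)) ≤ b - a) (hVa : V a ≤ 1) (hVb : 0 ≤ V b)
    (hanti : AntitoneOn V (Icc a b)) (hV : ∀ t ∈ Icc a b, HasDerivAt V (V' t) t)
    (hV' : ∀ t ∈ Icc a b, V' t ≤ -(c * V t ^ q)) :
    V b = 0 := by
  by_contra hb
  replace hb : 0 < V b := hVb.lt_of_ne' hb
  have hq₁ : 0 < 1 - q := sub_pos.2 hq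
  have hab : a ≤ b := by linarith [show 0 < 1 / (c * (1 - q)) by positivity]
  have hpos : ∀ t ∈ Icc a b, 0 < V t := fun t ht ↦
    hb.trans_le (hanti ht (right_mem_Icc.2 hab) ht.2)
  have hdecay := antitoneOn_rpow_div_add_mul_of_hasDerivAt_le_neg_rpow (convex_Icc a b) hq.ne
    hV hpos hV' (left_mem_Icc.2 hab) (right_mem_Icc.2 hab) hab
  have hloss : V b ^ (1 - q) + c * (1 - q) * (b - a) ≤ V a ^ (1 - q) := by
    have h := mul_le_mul_of_nonneg_right hdecay hq₁.le
    simp only [add_mul, div_mul_cancel₀ _ hq₁.ne'] at h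
    linarith
  have hone : 1 ≤ c * (1 - q) * (b - a) := by
    rwa [div_le_iff₀ (by positivity), mul_comm] at hT
  have hVa' : V a ^ (1 - q) ≤ 1 := rpow_le_one (hpos a (left_mem_Icc.2 hab)).le hVa hq₁.le
  have hVb' : 0 < V b ^ (1 - q) := rpow_pos_of_pos hb _
  linarith

theorem rpow_mul_rpow_mul_le_rpow_add {c x y r k : ℝ} (hc : 0 ≤ c) (hx : 0 ≤ x) (hy : 0 ≤ y)
    (hk : 0 ≤ k) : c ^ k * x ^ (r * k) ≤ (c * x ^ r + y) ^ k := by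
  rw [rpow_mul hx, ← mul_rpow hc (rpow_nonneg hx r)]
  exact rpow_le_rpow (by positivity) (le_add_of_nonneg_right hy) hk

theorem fixed_time_lyapunov_comparison_general
    (c₁ c₂ k r₁ r₂ : ℝ) (hc₁ : 0 < c₁) (hc₂ : 0 < c₂) (hk : 0 < k)
    (hr₁k : r₁ * k < 1) (hr₂k : 1 < r₂ * k)
    (V V' : ℝ → ℝ)
    (hV : ∀ t ≥ (0:ℝ), HasDerivAt V (V' t) t)
    (hVnonneg : ∀ t ≥ (0:ℝ), 0 ≤ V t)
    (hV' : ∀ t ≥ (0:ℝ), V' t ≤ -(c₁ * (V t) ^ r₁ + c₂ * (V t) ^ r₂) ^ k) :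
    ∀ t : ℝ, 1 / (c₁ ^ k * (1 - r₁ * k)) + 1 / (c₂ ^ k * (r₂ * k - 1)) ≤ t → V t = 0 := by
  intro t ht
  have hdecay₁ : ∀ s ≥ (0:ℝ), V' s ≤ -(c₁ ^ k * V s ^ (r₁ * k)) := fun s hs ↦ by
    linarith [hV' s hs, rpow_mul_rpow_mul_le_rpow_add (r := r₁) hc₁.le (hVnonneg s hs)
      (mul_nonneg hc₂.le (rpow_nonneg (hVnonneg s hs) r₂)) hk.le]
  have hdecay₂ : ∀ s ≥ (0:ℝ), V' s ≤ -(c₂ ^ k * V s ^ (r₂ * k)) := fun s hs ↦ by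
    have h := rpow_mul_rpow_mul_le_rpow_add (r := r₂) hc₂.le (hVnonneg s hs)
      (mul_nonneg hc₁.le (rpow_nonneg (hVnonneg s hs) r₁)) hk.le
    rw [add_comm] at h
    linarith [hV' s hs]
  have hanti : AntitoneOn V (Ici 0) :=
    (convex_Ici 0).antitoneOn_of_hasDerivAt_nonpos hV fun s hs ↦ (hdecay₁ s hs).trans <|
      neg_nonpos.2 (mul_nonneg (rpow_nonneg hc₁.le k) (rpow_nonneg (hVnonneg s hs) _))
  set T₁ := 1 / (c₁ ^ k * (1 - r₁ * k))
  set T₂ := 1 / (c₂ ^ k * (r₂ * k - 1))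
  have hT₁ : 0 < T₁ := one_div_pos.2 (mul_pos (rpow_pos_of_pos hc₁ k) (by linarith))
  have hT₂ : 0 < T₂ := one_div_pos.2 (mul_pos (rpow_pos_of_pos hc₂ k) (by linarith))
  have hVT₂ : V T₂ ≤ 1 :=
    le_one_of_hasDerivAt_le_neg_rpow_of_one_lt hr₂k (rpow_pos_of_pos hc₂ k) (sub_zero T₂).ge
      (hanti.mono Icc_subset_Ici_self) (fun s hs ↦ hV s hs.1) fun s hs ↦ hdecay₂ s hs.1
  exact eq_zero_of_hasDerivAt_le_neg_rpow_of_lt_one hr₁k (rpow_pos_of_pos hc₁ k) (by linarith)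
    hVT₂ (hVnonneg t (by linarith))
    (hanti.mono (Icc_subset_Ici_self.trans (Ici_subset_Ici.2 hT₂.le)))
    (fun s hs ↦ hV s (hT₂.le.trans hs.1)) fun s hs ↦ hdecay₁ s (hT₂.le.trans hs.1)

/-- Scalar Lyapunov comparison form of fixed-time stability (Lemma 2(2)). -/
theorem fixed_time_lyapunov_comparison
    (c₁ c₂ k r₁ r₂ : ℝ) (hc₁ : 0 < c₁) (hc₂ : 0 < c₂) (hk : 0 < k)
    (hr₁ : 0 < r₁) (hr₂ : 0 < r₂) (hr₁k : r₁ * k < 1) (hr₂k : 1 < r₂ * k)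
    (V V' : ℝ → ℝ)
    (hV : ∀ t ≥ (0:ℝ), HasDerivAt V (V' t) t)
    (hVnonneg : ∀ t ≥ (0:ℝ), 0 ≤ V t)
    (hV' : ∀ t ≥ (0:ℝ), V' t ≤ -(c₁ * (V t) ^ r₁ + c₂ * (V t) ^ r₂) ^ k) :
    ∀ t : ℝ, 1 / (c₁ ^ k * (1 - r₁ * k)) + 1 / (c₂ ^ k * (r₂ * k - 1)) ≤ t → V t = 0 :=
  fixed_time_lyapunov_comparison_general c₁ c₂ k r₁ r₂ hc₁ hc₂ hk hr₁k hr₂k V V' hV hVnonneg hV'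
end

section
/- For every n ≥ 1 and every y ∈ ℝ^n, Σ_{i=1}^n |y_i|·e^{|y_i|} ≥ (‖y‖₂/√n)·e^{‖y‖₂/√n}. (Lemma 4, item 5, inequality (24).) -/
/-- Lemma 4, item 5, inequality (24): Σᵢ |yᵢ|·e^{|yᵢ|} ≥ (‖y‖₂/√n)·e^{‖y‖₂/√n}. -/
theorem exp_weighted_sum_lower_bound
    (n : ℕ) (hn : 1 ≤ n) (y : EuclideanSpace ℝ (Fin n)) :
    (‖y‖ / Real.sqrt n) * Real.exp (‖y‖ / Real.sqrt n) ≤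
      ∑ i, |y i| * Real.exp |y i| := by
  have hne : (Finset.univ : Finset (Fin n)).Nonempty := by
    simpa [Finset.univ_nonempty_iff] using (Fin.pos_iff_nonempty.mp hn)
  obtain ⟨j, -, hj⟩ := Finset.exists_max_image Finset.univ (fun i => |y i|) hne
  have hsqn : (0:ℝ) < Real.sqrt n := Real.sqrt_pos.mpr (by exact_mod_cast hn)
  have hmax : ‖y‖ / Real.sqrt n ≤ |y j| := by
    rw [div_le_iff₀ hsqn]
    have h1 : ‖y‖ ^ 2 ≤ (|y j| * Real.sqrt n) ^ 2 := by
      rw [EuclideanSpace.norm_eq, Real.sq_sqrt (by positivity)]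
      rw [mul_pow, Real.sq_sqrt (by positivity), sq_abs]
      calc ∑ i, ‖y i‖ ^ 2 ≤ ∑ _i : Fin n, (y j) ^ 2 := by
            apply Finset.sum_le_sum
            intro i _
            rw [Real.norm_eq_abs, ← sq_abs (y j)]
            exact pow_le_pow_left₀ (abs_nonneg _) (hj i (Finset.mem_univ i)) 2
        _ = (y j) ^ 2 * n := by simp [mul_comm]
    exact (pow_le_pow_iff_left₀ (norm_nonneg y) (by positivity) two_ne_zero).mp h1
  have key : (‖y‖ / Real.sqrt n) * Real.exp (‖y‖ / Real.sqrt n) ≤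
      |y j| * Real.exp |y j| := by
    apply mul_le_mul hmax (Real.exp_le_exp.mpr hmax) (Real.exp_pos _).le (abs_nonneg _)
  refine key.trans ?_
  apply Finset.single_le_sum (f := fun i => |y i| * Real.exp |y i|)
    (fun i _ => by positivity) (Finset.mem_univ j)
end

section
/- Let f : ℝ^n → ℝ be continuously differentiable, attain its minimum value f* at some point, and satisfy the Polyak–Łojasiewicz (PL) inequality with parameter μ > 0: (1/2)‖∇f(z)‖₂² ≥ μ(f(z) − f*) for all z ∈ ℝ^n. Let σ, ρ > 0, p ∈ [0,1), q > 1, and let g : ℝ^n → ℝ^n satisfy ⟨g(y), y⟩ ≥ σ‖y‖₂^{1+p} + ρ‖y‖₂^{1+q} for all y ∈ ℝ^n. If x : [0,∞) → ℝ^n is differentiable and satisfies the fixed-time gradient flow x′(t) = −g(∇f(x(t))) for all t ≥ 0, then f(x(t)) = f* for all t ≥ T, where T = 1/(μσ(1−p)) + 1/(μρ(q−1)); in particular the settling time is bounded uniformly in the initial state x(0). (Theorem 1.) -/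
/-!
Along the flow, `V = 2μ (f ∘ x - f*)` satisfies, by the chain rule, the PL inequality and the
growth assumption on `g`, the scalar differential inequality `V' ≤ -α V^a - β V^b` with
`α = 2μσ`, `a = (1+p)/2 < 1`, `β = 2μρ`, `b = (1+q)/2 > 1`.
While `V > 0`, the power `V^(1-b)` grows at rate at least `β(b-1)`, so `V ≤ 1` by time
`1/(β(b-1))` whatever `V(0)` is; after that `V^(1-a)` decreases at rate at least `α(1-a)` from a
value at most `1`, so it reaches `0` within another `1/(α(1-a))`.
-/

open Set
open scoped RealInnerProductSpace

lemma image_sub_le_mul_sub_of_hasDerivAt_le {h h' : ℝ → ℝ} {a b C : ℝ} (hab : a ≤ b)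
    (hd : ∀ t ∈ Icc a b, HasDerivAt h (h' t) t) (hle : ∀ t ∈ Icc a b, h' t ≤ C) :
    h b - h a ≤ C * (b - a) := by
  have hd' : ∀ t ∈ Icc a b, HasDerivAt (fun s => h s - C * s) (h' t - C) t := fun t ht => by
    simpa using (hd t ht).fun_sub ((hasDerivAt_id' t).const_mul C)
  have hanti : AntitoneOn (fun s => h s - C * s) (Icc a b) :=
    antitoneOn_of_hasDerivWithinAt_nonpos (convex_Icc a b)
      (fun t ht => (hd' t ht).continuousAt.continuousWithinAt)
      (fun t ht => (hd' t (interior_subset ht)).hasDerivWithinAt)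
      (fun t ht => sub_nonpos.2 (hle t (interior_subset ht)))
  have := hanti (left_mem_Icc.2 hab) (right_mem_Icc.2 hab) hab
  simp only at this
  linarith

lemma mul_rpow_neg_le_of_le_neg_mul_rpow {x d α a : ℝ} (hx : 0 < x) (h : d ≤ -α * x ^ a) :
    d * x ^ (-a) ≤ -α := by
  rw [Real.rpow_neg hx.le, ← div_eq_mul_inv, div_le_iff₀ (Real.rpow_pos_of_pos hx a)]
  exact h

lemma HasDerivAt.rpow_one_sub {B : ℝ → ℝ} {d a t : ℝ} (hB : HasDerivAt B d t)
    (hpos : 0 < B t) :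
    HasDerivAt (fun s => B s ^ (1 - a)) ((1 - a) * (d * B t ^ (-a))) t := by
  convert hB.rpow_const (p := 1 - a) (Or.inl hpos.ne') using 1
  rw [sub_sub_cancel_left]
  ring

section PowerDecay

variable {B B' : ℝ → ℝ} {t₀ t₁ : ℝ}

lemma rpow_one_sub_sub_le_of_hasDerivAt_le {α a : ℝ} (ha : a < 1) (h01 : t₀ ≤ t₁)
    (hpos : ∀ t ∈ Icc t₀ t₁, 0 < B t) (hd : ∀ t ∈ Icc t₀ t₁, HasDerivAt B (B' t) t)
    (hle : ∀ t ∈ Icc t₀ t₁, B' t ≤ -α * B t ^ a) :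
    B t₁ ^ (1 - a) - B t₀ ^ (1 - a) ≤ -(α * (1 - a)) * (t₁ - t₀) := by
  refine image_sub_le_mul_sub_of_hasDerivAt_le h01 (fun t ht => (hd t ht).rpow_one_sub (hpos t ht))
    fun t ht => ?_
  have := mul_rpow_neg_le_of_le_neg_mul_rpow (hpos t ht) (hle t ht)
  nlinarith

lemma mul_sub_le_rpow_one_sub_sub_of_hasDerivAt_le {β b : ℝ} (hb : 1 < b) (h01 : t₀ ≤ t₁)
    (hpos : ∀ t ∈ Icc t₀ t₁, 0 < B t) (hd : ∀ t ∈ Icc t₀ t₁, HasDerivAt B (B' t) t)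
    (hle : ∀ t ∈ Icc t₀ t₁, B' t ≤ -β * B t ^ b) :
    β * (b - 1) * (t₁ - t₀) ≤ B t₁ ^ (1 - b) - B t₀ ^ (1 - b) := by
  have := image_sub_le_mul_sub_of_hasDerivAt_le h01
    (fun t ht => ((hd t ht).rpow_one_sub (a := b) (hpos t ht)).neg) fun t ht => by
      have := mul_rpow_neg_le_of_le_neg_mul_rpow (hpos t ht) (hle t ht)
      show -((1 - b) * _) ≤ -(β * (b - 1))
      nlinarith
  simp only [Pi.neg_apply] at this
  linarith

end PowerDecay

theorem eq_zero_of_hasDerivAt_le_neg_mul_rpow_sub_mul_rpow {B B' : ℝ → ℝ} {α β a b T : ℝ}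
    (hα : 0 < α) (hβ : 0 < β) (ha : a < 1) (hb : 1 < b)
    (hnonneg : ∀ t ∈ Icc 0 T, 0 ≤ B t) (hd : ∀ t ∈ Icc 0 T, HasDerivAt B (B' t) t)
    (hle : ∀ t ∈ Icc 0 T, B' t ≤ -α * B t ^ a - β * B t ^ b)
    (hT : 1 / (α * (1 - a)) + 1 / (β * (b - 1)) ≤ T) :
    B T = 0 := by
  set T₁ := 1 / (β * (b - 1))
  have hαa : 0 < α * (1 - a) := mul_pos hα (by linarith)
  have hβb : 0 < β * (b - 1) := mul_pos hβ (by linarith)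
  have hT₁ : 0 ≤ T₁ := by positivity
  have hT₁T : T₁ ≤ T := by linarith [one_div_pos.2 hαa]
  have hpow : ∀ t ∈ Icc 0 T, ∀ c : ℝ, 0 ≤ B t ^ c := fun t ht c =>
    Real.rpow_nonneg (hnonneg t ht) c
  have hB'_nonpos : ∀ t ∈ Icc 0 T, B' t ≤ 0 := fun t ht => by
    nlinarith [hle t ht, hpow t ht a, hpow t ht b]
  by_contra hne
  have hpos : ∀ t ∈ Icc 0 T, 0 < B t := fun t ht => by
    have hanti := image_sub_le_mul_sub_of_hasDerivAt_le ht.2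
      (fun s hs => hd s ⟨ht.1.trans hs.1, hs.2⟩)
      fun s hs => hB'_nonpos s ⟨ht.1.trans hs.1, hs.2⟩
    have := lt_of_le_of_ne (hnonneg T ⟨hT₁.trans hT₁T, le_rfl⟩) (Ne.symm hne)
    linarith
  have sub₁ : Icc 0 T₁ ⊆ Icc 0 T := Icc_subset_Icc le_rfl hT₁T
  have sub₂ : Icc T₁ T ⊆ Icc 0 T := Icc_subset_Icc hT₁ le_rfl
  have hB₁ : B T₁ ≤ 1 := by
    have := mul_sub_le_rpow_one_sub_sub_of_hasDerivAt_le (β := β) hb hT₁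
      (fun t ht => hpos t (sub₁ ht)) (fun t ht => hd t (sub₁ ht))
      fun t ht => by linarith [hle t (sub₁ ht), mul_nonneg hα.le (hpow t (sub₁ ht) a)]
    have hgrow : 1 < B T₁ ^ (1 - b) := by
      rw [sub_zero, mul_one_div_cancel hβb.ne'] at this
      linarith [Real.rpow_pos_of_pos (hpos 0 (sub₁ ⟨le_rfl, hT₁⟩)) (1 - b)]
    by_contra! h
    linarith [Real.rpow_le_one_of_one_le_of_nonpos h.le (by linarith : 1 - b ≤ 0)]
  have hdecay := rpow_one_sub_sub_le_of_hasDerivAt_le (α := α) ha hT₁T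
    (fun t ht => hpos t (sub₂ ht)) (fun t ht => hd t (sub₂ ht))
    fun t ht => by linarith [hle t (sub₂ ht), mul_nonneg hβ.le (hpow t (sub₂ ht) b)]
  have hlong : 1 ≤ α * (1 - a) * (T - T₁) := by
    calc 1 = α * (1 - a) * (1 / (α * (1 - a))) := (mul_one_div_cancel hαa.ne').symm
      _ ≤ α * (1 - a) * (T - T₁) := by gcongr; linarith
  have hstart : B T₁ ^ (1 - a) ≤ 1 :=
    Real.rpow_le_one (hpos T₁ (sub₁ ⟨hT₁, le_rfl⟩)).le hB₁ (by linarith)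
  have hend : 0 < B T ^ (1 - a) := Real.rpow_pos_of_pos (hpos T ⟨hT₁.trans hT₁T, le_rfl⟩) _
  linarith

lemma rpow_div_two_le_rpow_of_le_sq {v r s : ℝ} (hv : 0 ≤ v) (hr : 0 ≤ r) (hs : 0 ≤ s)
    (hvr : v ≤ r ^ 2) : v ^ (s / 2) ≤ r ^ s :=
  calc v ^ (s / 2) ≤ (r ^ 2) ^ (s / 2) := Real.rpow_le_rpow hv hvr (by positivity)
    _ = r ^ s := by rw [← Real.rpow_natCast, ← Real.rpow_mul hr]; congr 1; ring

lemma HasGradientAt.comp_hasDerivAt {E : Type*} [NormedAddCommGroup E] [InnerProductSpace ℝ E]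
    [CompleteSpace E] {f : E → ℝ} {f' : E} {x : ℝ → E} {v : E} {t : ℝ}
    (hf : HasGradientAt f f' (x t)) (hx : HasDerivAt x v t) :
    HasDerivAt (fun s => f (x s)) ⟪f', v⟫ t :=
  hf.hasFDerivAt.comp_hasDerivAt t hx

lemma mul_rpow_add_mul_rpow_le_of_le_sq {σ ρ p q v r c : ℝ} (hσ : 0 ≤ σ) (hρ : 0 ≤ ρ)
    (hp : -1 ≤ p) (hq : -1 ≤ q) (hv : 0 ≤ v) (hr : 0 ≤ r) (hvr : v ≤ r ^ 2)
    (hc : σ * r ^ (1 + p) + ρ * r ^ (1 + q) ≤ c) :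
    σ * v ^ ((1 + p) / 2) + ρ * v ^ ((1 + q) / 2) ≤ c := by
  have hpow : ∀ s : ℝ, -1 ≤ s → v ^ ((1 + s) / 2) ≤ r ^ (1 + s) := fun s hs =>
    rpow_div_two_le_rpow_of_le_sq hv hr (by linarith) hvr
  nlinarith [mul_le_mul_of_nonneg_left (hpow p hp) hσ, mul_le_mul_of_nonneg_left (hpow q hq) hρ]

theorem fxtgf_fixed_time_convergence_general
    {n : ℕ} (f : EuclideanSpace ℝ (Fin n) → ℝ) (fstar μ σ ρ p q : ℝ)
    (hf : ContDiff ℝ 1 f)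
    (hlb : ∀ z, fstar ≤ f z)
    (hμ : 0 < μ)
    (hPL : ∀ z, μ * (f z - fstar) ≤ (1/2) * ‖gradient f z‖ ^ 2)
    (hσ : 0 < σ) (hρ : 0 < ρ) (hp : p ∈ Set.Ico (0:ℝ) 1) (hq : 1 < q)
    (g : EuclideanSpace ℝ (Fin n) → EuclideanSpace ℝ (Fin n))
    (hg : ∀ y, σ * ‖y‖ ^ (1 + p) + ρ * ‖y‖ ^ (1 + q) ≤ ⟪g y, y⟫)
    (x : ℝ → EuclideanSpace ℝ (Fin n))
    (hx : ∀ t ≥ (0:ℝ), HasDerivAt x (-(g (gradient f (x t)))) t) :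
    ∀ t : ℝ, 1 / (μ * σ * (1 - p)) + 1 / (μ * ρ * (q - 1)) ≤ t → f (x t) = fstar := by
  intro T hT
  have hV_nonneg : ∀ t, 0 ≤ 2 * μ * (f (x t) - fstar) := fun t => by nlinarith [hlb (x t)]
  have hV_deriv : ∀ t ≥ 0, HasDerivAt (fun s => 2 * μ * (f (x s) - fstar))
      (2 * μ * ⟪gradient f (x t), -g (gradient f (x t))⟫) t := fun t ht =>
    (((hf.differentiable one_ne_zero _).hasGradientAt.comp_hasDerivAt (hx t ht)).sub_const
      fstar).const_mul (2 * μ)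
  have hV_le : ∀ t, 2 * μ * ⟪gradient f (x t), -g (gradient f (x t))⟫ ≤
      -(2 * μ * σ) * (2 * μ * (f (x t) - fstar)) ^ ((1 + p) / 2)
        - 2 * μ * ρ * (2 * μ * (f (x t) - fstar)) ^ ((1 + q) / 2) := fun t => by
    have := mul_rpow_add_mul_rpow_le_of_le_sq hσ.le hρ.le (by linarith [hp.1]) (by linarith)
      (hV_nonneg t) (norm_nonneg _) (by linarith [hPL (x t)]) (hg (gradient f (x t)))
    rw [inner_neg_right, real_inner_comm]
    nlinarith
  have hT' :
      1 / (2 * μ * σ * (1 - (1 + p) / 2)) + 1 / (2 * μ * ρ * ((1 + q) / 2 - 1)) ≤ T := by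
    convert hT using 3 <;> ring
  have hVT := eq_zero_of_hasDerivAt_le_neg_mul_rpow_sub_mul_rpow (by positivity) (by positivity)
    (by linarith [hp.2]) (by linarith) (fun t _ => hV_nonneg t) (fun t ht => hV_deriv t ht.1)
    (fun t _ => hV_le t) hT'
  simpa [hμ.ne', sub_eq_zero] using hVT

/-- Theorem 1: fixed-time convergence of the first-order FxT gradient flow under
the Polyak–Łojasiewicz inequality. -/
theorem fxtgf_fixed_time_convergence
    {n : ℕ} (f : EuclideanSpace ℝ (Fin n) → ℝ) (fstar μ σ ρ p q : ℝ)
    (hf : ContDiff ℝ 1 f)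
    (hmin : ∃ z, f z = fstar) (hlb : ∀ z, fstar ≤ f z)
    (hμ : 0 < μ)
    (hPL : ∀ z, μ * (f z - fstar) ≤ (1/2) * ‖gradient f z‖ ^ 2)
    (hσ : 0 < σ) (hρ : 0 < ρ) (hp : p ∈ Set.Ico (0:ℝ) 1) (hq : 1 < q)
    (g : EuclideanSpace ℝ (Fin n) → EuclideanSpace ℝ (Fin n))
    (hg : ∀ y, σ * ‖y‖ ^ (1 + p) + ρ * ‖y‖ ^ (1 + q) ≤ ⟪g y, y⟫)
    (x : ℝ → EuclideanSpace ℝ (Fin n))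
    (hx : ∀ t ≥ (0:ℝ), HasDerivAt x (-(g (gradient f (x t)))) t) :
    ∀ t : ℝ, 1 / (μ * σ * (1 - p)) + 1 / (μ * ρ * (q - 1)) ≤ t → f (x t) = fstar :=
  fxtgf_fixed_time_convergence_general f fstar μ σ ρ p q hf hlb hμ hPL hσ hρ hp hq g hg x hx
end

section
/- Let f : ℝ^n → ℝ be continuously differentiable, attain its minimum value f* at some point, and satisfy the Polyak–Łojasiewicz (PL) inequality with parameter μ > 0: (1/2)‖∇f(z)‖₂² ≥ μ(f(z) − f*) for all z ∈ ℝ^n. Let α > 0 and define g : ℝ^n → ℝ^n by g(y) = α·e^{‖y‖₂}·y/‖y‖₂ for y ≠ 0 and g(0) = 0. If x : [0,∞) → ℝ^n is differentiable and x′(t) = −g(∇f(x(t))) for all t ≥ 0, then f(x(t)) = f* for all t ≥ 1/(αμ), a fixed-time bound independent of the initial state x(0). (Proposition 1.) -/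
/-!
Along the flow, `W = 2μ (f ∘ x - f*)` has derivative `-2μα ‖∇f‖ e^{‖∇f‖}`, and the PL inequality
`√W ≤ ‖∇f‖` together with the monotonicity of `s ↦ s e^s` turns this into the scalar differential
inequality `W' ≤ -2αμ √W e^{√W}`, which forces `W` to vanish by time `1 / (αμ)`.
-/

open Set Real
open scoped RealInnerProductSpace

theorem DifferentiableAt.hasDerivAt_comp_gradient {E : Type*} [NormedAddCommGroup E]
    [InnerProductSpace ℝ E] [CompleteSpace E] {f : E → ℝ} {x : ℝ → E} {v : E} {t : ℝ}
    (hf : DifferentiableAt ℝ f (x t)) (hx : HasDerivAt x v t) :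
    HasDerivAt (fun s => f (x s)) ⟪gradient f (x t), v⟫ t := by
  rw [inner_gradient_left]
  exact hf.hasFDerivAt.comp_hasDerivAt t hx

theorem inner_apply_eq_mul_exp_norm_mul_norm {E : Type*} [NormedAddCommGroup E]
    [InnerProductSpace ℝ E] {α : ℝ} {g : E → E}
    (hg : ∀ y, y ≠ 0 → g y = (α * exp ‖y‖ / ‖y‖) • y) (y : E) :
    ⟪y, g y⟫ = α * exp ‖y‖ * ‖y‖ := by
  rcases eq_or_ne y 0 with rfl | hy
  · simp
  · have : ‖y‖ ≠ 0 := norm_ne_zero_iff.2 hy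
    rw [hg y hy, real_inner_smul_right, real_inner_self_eq_norm_sq]
    field_simp

/-- While `W > 0`, the function `exp (-√W)`, which takes values in `(0, 1]`, grows at rate at least
`c`; hence `W` cannot stay positive on `[0, 1 / c]`. -/
theorem eq_zero_of_hasDerivAt_le_neg_sqrt_mul_exp {W W' : ℝ → ℝ} {c : ℝ} (hc : 0 < c)
    (hW : ∀ s ≥ 0, HasDerivAt W (W' s) s) (hW_nonneg : ∀ s ≥ 0, 0 ≤ W s)
    (hW' : ∀ s ≥ 0, W' s ≤ -(2 * c * √(W s) * exp √(W s))) :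
    ∀ t, 1 / c ≤ t → W t = 0 := by
  have hT : 0 < 1 / c := by positivity
  have hcont : ContinuousOn W (Ici 0) := fun s hs => (hW s hs).continuousAt.continuousWithinAt
  have hanti : AntitoneOn W (Ici 0) := by
    refine antitoneOn_of_hasDerivWithinAt_nonpos (convex_Ici 0) hcont
      (fun s hs => (hW s (interior_subset hs)).hasDerivWithinAt) fun s hs => ?_
    have := hW' s (interior_subset hs)
    have : 0 ≤ 2 * c * √(W s) * exp √(W s) := by positivity
    linarith
  suffices hWT : W (1 / c) = 0 by
    intro t ht
    exact le_antisymm (hWT ▸ hanti hT.le (hT.le.trans ht) ht) (hW_nonneg t (hT.le.trans ht))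
  by_contra hne
  have hpos : ∀ s ∈ Icc 0 (1 / c), 0 < W s := fun s hs =>
    ((hW_nonneg _ hT.le).lt_of_ne' hne).trans_le (hanti hs.1 hT.le hs.2)
  set ψ : ℝ → ℝ := fun s => exp (-√(W s)) - c * s
  have hψ : MonotoneOn ψ (Icc 0 (1 / c)) := by
    refine monotoneOn_of_hasDerivWithinAt_nonneg (convex_Icc 0 (1 / c))
      (f' := fun s => exp (-√(W s)) * -(W' s / (2 * √(W s))) - c)
      ((continuous_exp.comp_continuousOn ((continuous_sqrt.comp_continuousOn
        (hcont.mono Icc_subset_Ici_self)).neg)).sub (by fun_prop))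
      (fun s hs => ?_) (fun s hs => ?_)
    · rw [interior_Icc] at hs
      have hWs := hW s hs.1.le
      exact (((hWs.sqrt (hpos s (Ioo_subset_Icc_self hs)).ne').neg.exp).sub
        ((hasDerivAt_id s).const_mul c)).hasDerivWithinAt.congr_deriv
        (by simp only [Pi.neg_apply]; ring)
    · rw [interior_Icc] at hs
      have hu : 0 < √(W s) := sqrt_pos.2 (hpos s (Ioo_subset_Icc_self hs))
      have hrate : c * exp √(W s) ≤ -(W' s / (2 * √(W s))) := by
        rw [← neg_div, le_div_iff₀ (by positivity)]
        linarith [hW' s hs.1.le]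
      calc (0 : ℝ) = exp (-√(W s)) * (c * exp √(W s)) - c := by rw [exp_neg]; field_simp; ring
        _ ≤ _ := by gcongr
  have := hψ ⟨le_rfl, hT.le⟩ ⟨hT.le, le_rfl⟩ hT.le
  have h1 : exp (-√(W (1 / c))) ≤ 1 := exp_le_one_iff.2 (neg_nonpos.2 (sqrt_nonneg _))
  have h2 := exp_pos (-√(W 0))
  simp only [ψ, mul_zero, sub_zero, mul_one_div_cancel hc.ne'] at this
  linarith

theorem exp_fxtgf_fixed_time_convergence_general
    {n : ℕ} (f : EuclideanSpace ℝ (Fin n) → ℝ) (fstar μ α : ℝ)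
    (hf : ContDiff ℝ 1 f)
    (hlb : ∀ z, fstar ≤ f z)
    (hμ : 0 < μ)
    (hPL : ∀ z, μ * (f z - fstar) ≤ (1/2) * ‖gradient f z‖ ^ 2)
    (hα : 0 < α)
    (g : EuclideanSpace ℝ (Fin n) → EuclideanSpace ℝ (Fin n))
    (hg : ∀ y, y ≠ 0 → g y = (α * Real.exp ‖y‖ / ‖y‖) • y)
    (x : ℝ → EuclideanSpace ℝ (Fin n))
    (hx : ∀ t ≥ (0:ℝ), HasDerivAt x (-(g (gradient f (x t)))) t) :
    ∀ t : ℝ, 1 / (α * μ) ≤ t → f (x t) = fstar := by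
  have hdecay : ∀ s ≥ 0, HasDerivAt (fun s => 2 * μ * (f (x s) - fstar))
      (-(2 * μ * (α * exp ‖gradient f (x s)‖ * ‖gradient f (x s)‖))) s := by
    intro s hs
    have hfx := (hf.differentiable one_ne_zero).differentiableAt.hasDerivAt_comp_gradient (hx s hs)
    have := (hfx.sub_const fstar).const_mul (2 * μ)
    rwa [inner_neg_right, inner_apply_eq_mul_exp_norm_mul_norm hg, mul_neg] at this
  have hPL_sqrt : ∀ z, √(2 * μ * (f z - fstar)) ≤ ‖gradient f z‖ := fun z =>
    (sqrt_le_left (norm_nonneg _)).2 (by linarith [hPL z])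
  intro t ht
  have hgap := eq_zero_of_hasDerivAt_le_neg_sqrt_mul_exp (mul_pos hα hμ) hdecay
    (fun s _ => mul_nonneg (by positivity) (sub_nonneg.2 (hlb _))) (fun s _ => ?_) t ht
  · exact sub_eq_zero.1 ((mul_eq_zero.1 hgap).resolve_left (by positivity))
  · have hu := hPL_sqrt (x s)
    rw [neg_le_neg_iff]
    calc 2 * (α * μ) * √(2 * μ * (f (x s) - fstar)) * exp √(2 * μ * (f (x s) - fstar))
        = 2 * μ * α * (√(2 * μ * (f (x s) - fstar)) * exp √(2 * μ * (f (x s) - fstar))) := by ring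
      _ ≤ 2 * μ * α * (‖gradient f (x s)‖ * exp ‖gradient f (x s)‖) := by gcongr
      _ = _ := by ring

/-- Proposition 1: fixed-time convergence of the exponential gradient flow
x' = -α e^{‖∇f(x)‖} ∇f(x)/‖∇f(x)‖ with bound 1/(αμ) independent of x(0). -/
theorem exp_fxtgf_fixed_time_convergence
    {n : ℕ} (f : EuclideanSpace ℝ (Fin n) → ℝ) (fstar μ α : ℝ)
    (hf : ContDiff ℝ 1 f)
    (hmin : ∃ z, f z = fstar) (hlb : ∀ z, fstar ≤ f z)
    (hμ : 0 < μ)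
    (hPL : ∀ z, μ * (f z - fstar) ≤ (1/2) * ‖gradient f z‖ ^ 2)
    (hα : 0 < α)
    (g : EuclideanSpace ℝ (Fin n) → EuclideanSpace ℝ (Fin n))
    (hg : ∀ y, y ≠ 0 → g y = (α * Real.exp ‖y‖ / ‖y‖) • y) (hg0 : g 0 = 0)
    (x : ℝ → EuclideanSpace ℝ (Fin n))
    (hx : ∀ t ≥ (0:ℝ), HasDerivAt x (-(g (gradient f (x t)))) t) :
    ∀ t : ℝ, 1 / (α * μ) ≤ t → f (x t) = fstar :=
  exp_fxtgf_fixed_time_convergence_general f fstar μ α hf hlb hμ hPL hα g hg x hx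
end

section
/- Let f : ℝ^n → ℝ be continuously differentiable, attain its minimum value f* at some point, and satisfy the Polyak–Łojasiewicz (PL) inequality with parameter μ > 0: (1/2)‖∇f(z)‖₂² ≥ μ(f(z) − f*) for all z ∈ ℝ^n. Let σ > 0, p ∈ [0,1), and let g : ℝ^n → ℝ^n satisfy ⟨g(y), y⟩ ≥ σ‖y‖₂^{1+p} for all y ∈ ℝ^n. If x : [0,∞) → ℝ^n is differentiable and x′(t) = −g(∇f(x(t))) for all t ≥ 0, then f(x(t)) = f* for all t ≥ T(x(0)), where T(x(0)) = (2μ(f(x(0)) − f*))^{(1−p)/2}/(μσ(1−p)); i.e. the flow converges to the set of minimizers in finite time. (Proposition 2.) -/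
/-!
Along the flow, `W = 2μ (f ∘ x - f*)` satisfies
`W' = 2μ ⟪∇f, -g ∇f⟫ ≤ -2μσ ‖∇f‖ ^ (1 + p) ≤ -2μσ W ^ ((1 + p) / 2)`, the last step by the PL
inequality. A differential inequality `W' ≤ -c W ^ q` with `q < 1` forces extinction in finite
time: as long as `W > 0`, the quantity `W ^ (1 - q)` decreases at rate at least `c (1 - q)`, so it
cannot stay positive beyond `W 0 ^ (1 - q) / (c (1 - q))`, and once zero `W` stays zero because it
is nonincreasing.
-/

open scoped RealInnerProductSpace

lemma HasDerivAt.comp_gradient {F : Type*} [NormedAddCommGroup F] [InnerProductSpace ℝ F]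
    [CompleteSpace F] {f : F → ℝ} {x : ℝ → F} {v : F} {t : ℝ}
    (hx : HasDerivAt x v t) (hf : DifferentiableAt ℝ f (x t)) :
    HasDerivAt (fun s ↦ f (x s)) ⟪gradient f (x t), v⟫ t := by
  simpa [Function.comp_def, InnerProductSpace.toDual_apply_apply] using
    hf.hasGradientAt.hasFDerivAt.comp_hasDerivAt t hx

lemma antitoneOn_of_hasDerivAt_nonpos {D : Set ℝ} (hD : Convex ℝ D) {V V' : ℝ → ℝ}
    (hV : ∀ t ∈ D, HasDerivAt V (V' t) t) (hV' : ∀ t ∈ D, V' t ≤ 0) : AntitoneOn V D :=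
  antitoneOn_of_hasDerivWithinAt_nonpos hD (fun t ht ↦ (hV t ht).continuousAt.continuousWithinAt)
    (fun t ht ↦ (hV t (interior_subset ht)).hasDerivWithinAt)
    (fun t ht ↦ hV' t (interior_subset ht))

lemma rpow_div_two_le_rpow_of_le_sq_s8 {a b r : ℝ} (ha : 0 ≤ a) (hb : 0 ≤ b) (hr : 0 ≤ r)
    (h : a ≤ b ^ 2) : a ^ (r / 2) ≤ b ^ r := by
  calc a ^ (r / 2) ≤ (b ^ 2) ^ (r / 2) := by gcongr
    _ = b ^ r := by
      rw [← Real.rpow_natCast, ← Real.rpow_mul hb]; congr 1; push_cast; ring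

section FiniteTimeExtinction

variable {D : Set ℝ} {V V' : ℝ → ℝ} {c q : ℝ}

lemma antitoneOn_rpow_add_mul_of_hasDerivAt_le (hD : Convex ℝ D)
    (hV : ∀ t ∈ D, HasDerivAt V (V' t) t) (hpos : ∀ t ∈ D, 0 < V t)
    (hdecay : ∀ t ∈ D, V' t ≤ -c * V t ^ q) (hq : q < 1) :
    AntitoneOn (fun t ↦ V t ^ (1 - q) + c * (1 - q) * t) D := by
  refine antitoneOn_of_hasDerivAt_nonpos hD (fun t ht ↦
    (((hV t ht).rpow_const (Or.inl (hpos t ht).ne')).add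
      ((hasDerivAt_id t).const_mul _))) fun t ht ↦ ?_
  have hVq : V t ^ (1 - q - 1) * V t ^ q = 1 := by
    rw [← Real.rpow_add (hpos t ht)]; simp
  have hmul := mul_le_mul_of_nonneg_left (hdecay t ht)
    (mul_nonneg (sub_nonneg.2 hq.le) (Real.rpow_nonneg (hpos t ht).le (1 - q - 1)))
  have hrhs : (1 - q) * V t ^ (1 - q - 1) * (-c * V t ^ q) = -(c * (1 - q)) := by
    linear_combination (-(c * (1 - q))) * hVq
  simp only [mul_one]
  linarith

theorem eq_zero_of_hasDerivAt_le_neg_mul_rpow (hV0 : ∀ t ≥ 0, 0 ≤ V t)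
    (hV : ∀ t ≥ 0, HasDerivAt V (V' t) t) (hdecay : ∀ t ≥ 0, V' t ≤ -c * V t ^ q)
    (hc : 0 < c) (hq : q < 1) (t : ℝ) (ht : V 0 ^ (1 - q) / (c * (1 - q)) ≤ t) : V t = 0 := by
  have hcq : 0 < c * (1 - q) := mul_pos hc (sub_pos.2 hq)
  have ht0 : 0 ≤ t := (div_nonneg (Real.rpow_nonneg (hV0 0 le_rfl) _) hcq.le).trans ht
  by_contra hne
  have hVt : 0 < V t := (hV0 t ht0).lt_of_ne' hne
  have hanti : AntitoneOn V (Set.Ici 0) := antitoneOn_of_hasDerivAt_nonpos (convex_Ici 0) hV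
    fun s hs ↦ (hdecay s hs).trans
      (mul_nonpos_of_nonpos_of_nonneg (neg_nonpos.2 hc.le) (Real.rpow_nonneg (hV0 s hs) q))
  have hpos : ∀ s ∈ Set.Icc 0 t, 0 < V s :=
    fun s hs ↦ hVt.trans_le (hanti hs.1 ht0 hs.2)
  have hcomp := antitoneOn_rpow_add_mul_of_hasDerivAt_le (convex_Icc 0 t)
    (fun s hs ↦ hV s hs.1) hpos (fun s hs ↦ hdecay s hs.1) hq
    (Set.left_mem_Icc.2 ht0) (Set.right_mem_Icc.2 ht0) ht0
  rw [div_le_iff₀ hcq] at ht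
  have := Real.rpow_pos_of_pos hVt (1 - q)
  simp only [mul_zero, add_zero] at hcomp
  linarith

end FiniteTimeExtinction

lemma inner_neg_le_neg_mul_rpow {F : Type*} [NormedAddCommGroup F] [InnerProductSpace ℝ F]
    {g : F → F} {σ r a : ℝ} (hg : ∀ y, σ * ‖y‖ ^ r ≤ ⟪g y, y⟫) (hσ : 0 ≤ σ) (hr : 0 ≤ r)
    (ha : 0 ≤ a) {y : F} (hy : a ≤ ‖y‖ ^ 2) : ⟪y, -g y⟫ ≤ -σ * a ^ (r / 2) := by
  have := mul_le_mul_of_nonneg_left (rpow_div_two_le_rpow_of_le_sq_s8 ha (norm_nonneg y) hr hy) hσ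
  rw [inner_neg_right, real_inner_comm]
  linarith [hg y]

theorem ftgf_finite_time_convergence_general
    {n : ℕ} (f : EuclideanSpace ℝ (Fin n) → ℝ) (fstar μ σ p : ℝ)
    (hf : ContDiff ℝ 1 f)
    (hlb : ∀ z, fstar ≤ f z)
    (hμ : 0 < μ)
    (hPL : ∀ z, μ * (f z - fstar) ≤ (1/2) * ‖gradient f z‖ ^ 2)
    (hσ : 0 < σ) (hp : p ∈ Set.Ico (0:ℝ) 1)
    (g : EuclideanSpace ℝ (Fin n) → EuclideanSpace ℝ (Fin n))
    (hg : ∀ y, σ * ‖y‖ ^ (1 + p) ≤ ⟪g y, y⟫)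
    (x : ℝ → EuclideanSpace ℝ (Fin n))
    (hx : ∀ t ≥ (0:ℝ), HasDerivAt x (-(g (gradient f (x t)))) t) :
    ∀ t : ℝ, (2 * μ * (f (x 0) - fstar)) ^ ((1 - p)/2) / (μ * σ * (1 - p)) ≤ t →
      f (x t) = fstar := by
  intro t ht
  set W : ℝ → ℝ := fun s ↦ 2 * μ * (f (x s) - fstar)
  have hW_nonneg : ∀ s ≥ 0, 0 ≤ W s := fun s _ ↦ mul_nonneg (by positivity) (sub_nonneg.2 (hlb _))
  have hW_deriv : ∀ s ≥ 0,
      HasDerivAt W (2 * μ * ⟪gradient f (x s), -g (gradient f (x s))⟫) s := fun s hs ↦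
    (((hx s hs).comp_gradient (hf.differentiable one_ne_zero _)).sub_const fstar).const_mul _
  have hW_decay : ∀ s ≥ 0, 2 * μ * ⟪gradient f (x s), -g (gradient f (x s))⟫ ≤
      -(2 * μ * σ) * W s ^ ((1 + p) / 2) := fun s hs ↦ by
    have := inner_neg_le_neg_mul_rpow hg hσ.le (by linarith [hp.1]) (hW_nonneg s hs)
      (by linarith [hPL (x s)])
    calc _ ≤ 2 * μ * (-σ * W s ^ ((1 + p) / 2)) := by gcongr
      _ = _ := by ring
  have hT : W 0 ^ (1 - (1 + p) / 2) / (2 * μ * σ * (1 - (1 + p) / 2)) ≤ t := by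
    rwa [show 1 - (1 + p) / 2 = (1 - p) / 2 by ring,
      show 2 * μ * σ * ((1 - p) / 2) = μ * σ * (1 - p) by ring]
  have hWt := eq_zero_of_hasDerivAt_le_neg_mul_rpow hW_nonneg hW_deriv hW_decay (by positivity)
    (by linarith [hp.2]) t hT
  simpa [W, hμ.ne', sub_eq_zero] using hWt

/-- Proposition 2: finite-time convergence of the gradient flow under the
Polyak–Łojasiewicz inequality, with settling time depending on the initial state. -/
theorem ftgf_finite_time_convergence
    {n : ℕ} (f : EuclideanSpace ℝ (Fin n) → ℝ) (fstar μ σ p : ℝ)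
    (hf : ContDiff ℝ 1 f)
    (hmin : ∃ z, f z = fstar) (hlb : ∀ z, fstar ≤ f z)
    (hμ : 0 < μ)
    (hPL : ∀ z, μ * (f z - fstar) ≤ (1/2) * ‖gradient f z‖ ^ 2)
    (hσ : 0 < σ) (hp : p ∈ Set.Ico (0:ℝ) 1)
    (g : EuclideanSpace ℝ (Fin n) → EuclideanSpace ℝ (Fin n))
    (hg : ∀ y, σ * ‖y‖ ^ (1 + p) ≤ ⟪g y, y⟫)
    (x : ℝ → EuclideanSpace ℝ (Fin n))
    (hx : ∀ t ≥ (0:ℝ), HasDerivAt x (-(g (gradient f (x t)))) t) :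
    ∀ t : ℝ, (2 * μ * (f (x 0) - fstar)) ^ ((1 - p)/2) / (μ * σ * (1 - p)) ≤ t →
      f (x t) = fstar :=
  ftgf_finite_time_convergence_general f fstar μ σ p hf hlb hμ hPL hσ hp g hg x hx
end

section
/- Let f : ℝ^n → ℝ be twice continuously differentiable, attain its minimum at some point, and suppose the Hessian ∇²f(z) (the derivative of the gradient map z ↦ ∇f(z)) is positive definite for every z ∈ ℝ^n, so that f has a unique minimizer x*. Let σ, ρ > 0, p ∈ [0,1), q > 1, and let g : ℝ^n → ℝ^n satisfy ⟨g(y), y⟩ ≥ σ‖y‖₂^{1+p} + ρ‖y‖₂^{1+q} for all y ∈ ℝ^n. If x : [0,∞) → ℝ^n is differentiable and satisfies the Newton-based flow ∇²f(x(t))·x′(t) = −g(∇f(x(t))) for all t ≥ 0 (equivalently x′(t) = −(∇²f(x(t)))^{−1} g(∇f(x(t)))), then ∇f(x(t)) = 0, i.e. x(t) = x*, for all t ≥ T, where T = 1/(σ(1−p)) + 1/(ρ(q−1)); this bound is independent of both x(0) and the PL constant of f. (Theorem 3.) -/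
open scoped RealInnerProductSpace
open Set

/-!
Along the flow, `y = ∇f ∘ x` solves `y' = -g y`, so `‖y‖` is nonincreasing and, while
`y ≠ 0`, the quantities `‖y‖ ^ (1 - r) / (1 - r)` decrease at rate at least `σ` (for `r = p`)
and `ρ` (for `r = q`). Starting from any `y 0`, the `ρ`-term raises `‖y‖ ^ (1 - q)` by `1`
within time `1 / (ρ (q - 1))`, which forces `‖y‖ < 1`; from there the `σ`-term would push
`‖y‖ ^ (1 - p)` below `0` within a further `1 / (σ (1 - p))`. Hence `∇f (x t)` vanishes before
`T`, and stays `0`. A positive definite Hessian makes `∇f` strictly monotone, hence injective,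
so `x t` is the minimizer.
-/

lemma rpow_div_sub_rpow_div_le_of_hasDerivAt {W W' : ℝ → ℝ} {a b k e : ℝ} (he : e ≠ 0)
    (hab : a ≤ b) (hpos : ∀ s ∈ Icc a b, 0 < W s) (hW : ∀ s ∈ Icc a b, HasDerivAt W (W' s) s)
    (hW' : ∀ s ∈ Icc a b, W' s ≤ -k * W s ^ (1 - e)) :
    W b ^ e / e - W a ^ e / e ≤ -k * (b - a) := by
  have hd : ∀ s ∈ Icc a b,
      HasDerivAt (fun s => W s ^ e / e) (W' s * e * W s ^ (e - 1) / e) s :=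
    fun s hs => ((hW s hs).rpow_const (Or.inl (hpos s hs).ne')).div_const e
  refine (convex_Icc a b).image_sub_le_mul_sub_of_deriv_le
    (fun s hs => (hd s hs).continuousAt.continuousWithinAt)
    (fun s hs => (hd s (interior_subset hs)).differentiableAt.differentiableWithinAt)
    (fun s hs => ?_) a (left_mem_Icc.2 hab) b (right_mem_Icc.2 hab) hab
  replace hs := interior_subset hs
  have hWs := hpos s hs
  rw [(hd s hs).deriv]
  calc W' s * e * W s ^ (e - 1) / e = W' s * W s ^ (e - 1) := by field_simp
    _ ≤ -k * W s ^ (1 - e) * W s ^ (e - 1) :=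
      mul_le_mul_of_nonneg_right (hW' s hs) (by positivity)
    _ = -k := by rw [mul_assoc, ← Real.rpow_add hWs]; simp

lemma sq_rpow_eq_rpow {u : ℝ} (hu : 0 ≤ u) (r : ℝ) : (u ^ 2) ^ (r / 2) = u ^ r := by
  rw [← Real.rpow_natCast_mul hu]; congr 1; push_cast; ring

section FixedTimeFlow

variable {E : Type*} [NormedAddCommGroup E] [InnerProductSpace ℝ E] {g : E → E} {y : ℝ → E}

lemma norm_rpow_div_sub_le_of_hasDerivAt {k r a b : ℝ} (hr : r ≠ 1)
    (hg : ∀ v, k * ‖v‖ ^ (1 + r) ≤ ⟪g v, v⟫) (hab : a ≤ b) (hne : ∀ s ∈ Icc a b, y s ≠ 0)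
    (hy : ∀ s ∈ Icc a b, HasDerivAt y (-g (y s)) s) :
    ‖y b‖ ^ (1 - r) / (1 - r) - ‖y a‖ ^ (1 - r) / (1 - r) ≤ -k * (b - a) := by
  have hr' : (1 - r) / 2 ≠ 0 := by intro h; apply hr; linarith
  have key := rpow_div_sub_rpow_div_le_of_hasDerivAt (W := (‖y ·‖ ^ 2)) (k := 2 * k) hr' hab
    (fun s hs => by have := norm_pos_iff.2 (hne s hs); positivity)
    (fun s hs => (hy s hs).norm_sq) (fun s hs => ?_)
  · simp only [sq_rpow_eq_rpow (norm_nonneg _)] at key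
    field_simp at key ⊢
    linarith
  · have : 1 - (1 - r) / 2 = (1 + r) / 2 := by ring
    rw [this, sq_rpow_eq_rpow (norm_nonneg _), inner_neg_right, real_inner_comm]
    linarith [hg (y s)]

lemma antitoneOn_norm_sq_of_hasDerivAt (hg : ∀ v, 0 ≤ ⟪g v, v⟫)
    (hy : ∀ t ≥ (0 : ℝ), HasDerivAt y (-g (y t)) t) : AntitoneOn (‖y ·‖ ^ 2) (Ici 0) := by
  have hd : ∀ t ∈ Ici (0 : ℝ), HasDerivAt (‖y ·‖ ^ 2) (2 * ⟪y t, -g (y t)⟫) t :=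
    fun t ht => (hy t ht).norm_sq
  refine antitoneOn_of_deriv_nonpos (convex_Ici 0)
    (fun t ht => (hd t ht).continuousAt.continuousWithinAt)
    (fun t ht => (hd t (interior_subset ht)).differentiableAt.differentiableWithinAt)
    (fun t ht => ?_)
  rw [(hd t (interior_subset ht)).deriv, inner_neg_right, real_inner_comm]
  linarith [hg (y t)]

variable {σ ρ p q : ℝ}

lemma exists_mem_Icc_eq_zero_of_hasDerivAt (hσ : 0 < σ) (hρ : 0 < ρ) (hp : p < 1) (hq : 1 < q)
    (hg : ∀ v, σ * ‖v‖ ^ (1 + p) + ρ * ‖v‖ ^ (1 + q) ≤ ⟪g v, v⟫)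
    (hy : ∀ t ≥ (0 : ℝ), HasDerivAt y (-g (y t)) t) :
    ∃ s ∈ Icc 0 (1 / (σ * (1 - p)) + 1 / (ρ * (q - 1))), y s = 0 := by
  set A := 1 / (σ * (1 - p))
  set B := 1 / (ρ * (q - 1))
  have hσp : 0 < σ * (1 - p) := mul_pos hσ (by linarith)
  have hρq : 0 < ρ * (q - 1) := mul_pos hρ (by linarith)
  have hApos : 0 < A := by positivity
  have hBpos : 0 < B := by positivity
  by_contra! hne
  have hdecay (r : ℝ) (k : ℝ) (hr : r ≠ 1) (hk : ∀ v, k * ‖v‖ ^ (1 + r) ≤ ⟪g v, v⟫) (a b : ℝ)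
      (h0a : 0 ≤ a) (hab : a ≤ b) (hb : b ≤ A + B) :=
    norm_rpow_div_sub_le_of_hasDerivAt hr hk hab
      (fun s hs => hne s ⟨h0a.trans hs.1, hs.2.trans hb⟩) (fun s hs => hy s (h0a.trans hs.1))
  have hσg (v : E) : σ * ‖v‖ ^ (1 + p) ≤ ⟪g v, v⟫ := by
    have : 0 ≤ ρ * ‖v‖ ^ (1 + q) := by positivity
    linarith [hg v]
  have hρg (v : E) : ρ * ‖v‖ ^ (1 + q) ≤ ⟪g v, v⟫ := by
    have : 0 ≤ σ * ‖v‖ ^ (1 + p) := by positivity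
    linarith [hg v]
  have h1 := hdecay q ρ hq.ne' hρg 0 B le_rfl hBpos.le (by linarith)
  have h2 := hdecay p σ hp.ne hσg B (A + B) hBpos.le (by linarith) le_rfl
  have hX : 1 < ‖y B‖ ^ (1 - q) := by
    have hY : 0 < ‖y 0‖ ^ (1 - q) :=
      Real.rpow_pos_of_pos (norm_pos_iff.2 (hne 0 ⟨le_rfl, by linarith⟩)) _
    have hρB : ρ * (q - 1) * B = 1 := mul_one_div_cancel hρq.ne'
    rw [← sub_div, div_le_iff_of_neg (by linarith)] at h1
    nlinarith
  have hyB : ‖y B‖ < 1 := by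
    by_contra! h
    linarith [Real.rpow_le_one_of_one_le_of_nonpos h (by linarith : 1 - q ≤ 0)]
  have hZ : 0 < ‖y (A + B)‖ ^ (1 - p) :=
    Real.rpow_pos_of_pos (norm_pos_iff.2 (hne _ ⟨by linarith, le_rfl⟩)) _
  have hX' : ‖y B‖ ^ (1 - p) < 1 := Real.rpow_lt_one (norm_nonneg _) hyB (by linarith)
  have hσA : σ * (1 - p) * A = 1 := mul_one_div_cancel hσp.ne'
  rw [← sub_div, div_le_iff₀ (by linarith)] at h2
  nlinarith

lemma eq_zero_of_le_of_hasDerivAt (hσ : 0 < σ) (hρ : 0 < ρ) (hp : p < 1) (hq : 1 < q)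
    (hg : ∀ v, σ * ‖v‖ ^ (1 + p) + ρ * ‖v‖ ^ (1 + q) ≤ ⟪g v, v⟫)
    (hy : ∀ t ≥ (0 : ℝ), HasDerivAt y (-g (y t)) t) {t : ℝ}
    (ht : 1 / (σ * (1 - p)) + 1 / (ρ * (q - 1)) ≤ t) : y t = 0 := by
  obtain ⟨s, hs, hys⟩ := exists_mem_Icc_eq_zero_of_hasDerivAt hσ hρ hp hq hg hy
  have hinner (v : E) : 0 ≤ ⟪g v, v⟫ := (by positivity : 0 ≤ σ * ‖v‖ ^ (1 + p) + _).trans (hg v)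
  have := antitoneOn_norm_sq_of_hasDerivAt hinner hy hs.1 (hs.1.trans (hs.2.trans ht))
    (hs.2.trans ht)
  simpa [hys] using this

end FixedTimeFlow

section Gradient

variable {E : Type*} [NormedAddCommGroup E] [InnerProductSpace ℝ E] [CompleteSpace E]
  {f : E → ℝ}

lemma injective_gradient_of_posDef (hgd : Differentiable ℝ (gradient f))
    (hpd : ∀ z h, h ≠ 0 → 0 < ⟪fderiv ℝ (gradient f) z h, h⟫) :
    Function.Injective (gradient f) := by
  intro a b hab
  by_contra hne
  set d := b - a
  have hd : d ≠ 0 := sub_ne_zero.2 (Ne.symm hne)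
  have hψ (s : ℝ) : HasDerivAt (fun s : ℝ => ⟪gradient f (a + s • d), d⟫)
      ⟪fderiv ℝ (gradient f) (a + s • d) d, d⟫ s := by
    have hline : HasDerivAt (fun s : ℝ => a + s • d) d s := by
      simpa using ((hasDerivAt_id s).smul_const d).const_add a
    simpa using ((hgd _).hasFDerivAt.comp_hasDerivAt s hline).inner ℝ (hasDerivAt_const s d)
  have h01 := strictMono_of_hasDerivAt_pos hψ (fun s => hpd _ d hd) zero_lt_one
  simp [d, hab] at h01

lemma gradient_eq_zero_of_forall_le {a : E} (hmin : ∀ z, f a ≤ f z) : gradient f a = 0 := by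
  simp [gradient, IsLocalMin.fderiv_eq_zero (Filter.Eventually.of_forall hmin)]

lemma ContDiff.differentiable_gradient (hf : ContDiff ℝ 2 f) :
    Differentiable ℝ (gradient f) :=
  ((InnerProductSpace.toDual ℝ E).symm.contDiff.comp
    (hf.fderiv_right (m := 1) (by norm_num))).differentiable (by norm_num)

end Gradient

/-- Theorem 3: fixed-time convergence of the Newton-based FxT gradient flow. -/
theorem newton_fxtgf_fixed_time_convergence
    {n : ℕ} (f : EuclideanSpace ℝ (Fin n) → ℝ)
    (hf : ContDiff ℝ 2 f)
    (xstar : EuclideanSpace ℝ (Fin n)) (hmin : ∀ z, f xstar ≤ f z)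
    (hpd : ∀ z h, h ≠ 0 → 0 < ⟪fderiv ℝ (gradient f) z h, h⟫)
    (σ ρ p q : ℝ) (hσ : 0 < σ) (hρ : 0 < ρ) (hp : p ∈ Set.Ico (0:ℝ) 1) (hq : 1 < q)
    (g : EuclideanSpace ℝ (Fin n) → EuclideanSpace ℝ (Fin n))
    (hg : ∀ y, σ * ‖y‖ ^ (1 + p) + ρ * ‖y‖ ^ (1 + q) ≤ ⟪g y, y⟫)
    (x x' : ℝ → EuclideanSpace ℝ (Fin n))
    (hx : ∀ t ≥ (0:ℝ), HasDerivAt x (x' t) t)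
    (hflow : ∀ t ≥ (0:ℝ), fderiv ℝ (gradient f) (x t) (x' t) = -(g (gradient f (x t)))) :
    ∀ t : ℝ, 1 / (σ * (1 - p)) + 1 / (ρ * (q - 1)) ≤ t →
      gradient f (x t) = 0 ∧ x t = xstar := by
  intro t ht
  have hgd := hf.differentiable_gradient
  have hgrad_flow (s : ℝ) (hs : 0 ≤ s) :
      HasDerivAt (fun s => gradient f (x s)) (-g (gradient f (x s))) s := by
    have h := (hgd (x s)).hasFDerivAt.comp_hasDerivAt s (hx s hs)
    rwa [hflow s hs] at h
  have hzero : gradient f (x t) = 0 :=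
    eq_zero_of_le_of_hasDerivAt hσ hρ hp.2 hq hg hgrad_flow ht
  exact ⟨hzero, injective_gradient_of_posDef hgd hpd
    (hzero.trans (gradient_eq_zero_of_forall_le hmin).symm)⟩
end

section
/- Let f : ℝ × ℝ^n → ℝ be a time-varying cost such that, for every t ≥ 0, the map z ↦ f(t,z) is twice continuously differentiable, has positive definite Hessian, and attains its minimum at a unique point x*(t). Let σ, ρ > 0, p ∈ [0,1), q > 1, and let g : ℝ^n → ℝ^n satisfy ⟨g(y), y⟩ ≥ σ‖y‖₂^{1+p} + ρ‖y‖₂^{1+q} for all y ∈ ℝ^n. Suppose x : [0,∞) → ℝ^n is such that the map y(t) := ∇_z f(t, x(t)) is differentiable in t with y′(t) = −g(y(t)) for all t ≥ 0 (this is exactly the relation produced by the time-varying Newton flow ẋ = −∇²_{zz}f(t,x)^{−1}(g(∇_z f(t,x)) + ∂_t ∇_z f(t,x))). Then x(t) = x*(t) for all t ≥ T, where T = 1/(σ(1−p)) + 1/(ρ(q−1)); i.e. the trajectory tracks the optimal trajectory after a fixed time independent of x(0). (Proposition 4.) -/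
/-!
Along the flow, `y(t) = ∇f(t, x(t))` solves `y' = -g(y)`, so `V = ‖y‖²` satisfies
`V' ≤ -2σ V^((1+p)/2) - 2ρ V^((1+q)/2)`. Separating variables, the superlinear term alone brings
`V` below `1` within time `1/(ρ(q-1))` whatever `V(0)` is, and the sublinear term then brings it to
`0` within a further time `1/(σ(1-p))`. Hence `∇f(t, x(t)) = 0` for `t ≥ T`, and a critical point of
a function with positive semidefinite Hessian is its global minimum, which is unique.
-/

open scoped RealInnerProductSpace

open Set

section Convexity

variable {E : Type*} [NormedAddCommGroup E] [InnerProductSpace ℝ E] [CompleteSpace E]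
  {F : E → ℝ}

theorem ContDiff.differentiable_gradient_s11 (hF : ContDiff ℝ 2 F) :
    Differentiable ℝ (gradient F) :=
  (InnerProductSpace.toDual ℝ E).symm.toContinuousLinearEquiv.differentiable.comp
    ((hF.fderiv_right (m := 1) (by norm_num)).differentiable (by norm_num))

theorem hasDerivAt_comp_add_smul (hF : Differentiable ℝ F) (a v : E) (s : ℝ) :
    HasDerivAt (fun s : ℝ => F (a + s • v)) ⟪gradient F (a + s • v), v⟫ s := by
  have hline : HasDerivAt (fun s : ℝ => a + s • v) v s := by
    simpa using ((hasDerivAt_id s).smul_const v).const_add a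
  simpa [Function.comp_def, InnerProductSpace.toDual_apply_apply] using
    (hasGradientAt_iff_hasFDerivAt.mp (hF _).hasGradientAt).comp_hasDerivAt s hline

theorem monotone_inner_gradient_add_smul (hF : Differentiable ℝ (gradient F))
    (hpsd : ∀ z h, 0 ≤ ⟪fderiv ℝ (gradient F) z h, h⟫) (a v : E) :
    Monotone fun s : ℝ => ⟪gradient F (a + s • v), v⟫ := by
  refine monotone_of_hasDerivAt_nonneg (f' := fun s => ⟪fderiv ℝ (gradient F) (a + s • v) v, v⟫)
    (fun s => ?_) (fun s => hpsd _ v)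
  have hline : HasDerivAt (fun s : ℝ => a + s • v) v s := by
    simpa using ((hasDerivAt_id s).smul_const v).const_add a
  simpa using ((hF _).hasFDerivAt.comp_hasDerivAt s hline).inner ℝ (hasDerivAt_const s v)

theorem le_of_gradient_eq_zero (hF : ContDiff ℝ 2 F)
    (hpsd : ∀ z h, 0 ≤ ⟪fderiv ℝ (gradient F) z h, h⟫) {a : E} (ha : gradient F a = 0) (w : E) :
    F a ≤ F w := by
  have hF₁ : Differentiable ℝ F := hF.differentiable (by norm_num)
  have hmono := monotone_inner_gradient_add_smul hF.differentiable_gradient_s11 hpsd a (w - a)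
  have hφ : MonotoneOn (fun s : ℝ => F (a + s • (w - a))) (Ici 0) := by
    refine monotoneOn_of_hasDerivWithinAt_nonneg (convex_Ici 0)
      (fun s _ => (hasDerivAt_comp_add_smul hF₁ a (w - a) s).continuousAt.continuousWithinAt)
      (fun s _ => (hasDerivAt_comp_add_smul hF₁ a (w - a) s).hasDerivWithinAt) fun s hs => ?_
    rw [interior_Ici] at hs
    simpa [ha] using hmono (le_of_lt hs)
  simpa using hφ self_mem_Ici (mem_Ici.mpr zero_le_one) zero_le_one

end Convexity

theorem Real.sq_rpow_div_two {x : ℝ} (hx : 0 ≤ x) (r : ℝ) : (x ^ 2) ^ (r / 2) = x ^ r := by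
  rw [← Real.rpow_natCast, ← Real.rpow_mul hx, Nat.cast_ofNat, mul_div_cancel₀ r two_ne_zero]

section FixedTime

variable {V V' : ℝ → ℝ}

/-- Separation of variables for `V' ≤ -c V ^ γ`: `s ↦ V s ^ (1 - γ)` moves at rate at least
`c (1 - γ)`, downwards when `γ < 1` and upwards when `1 < γ`; multiplying by `1 - γ` treats both
cases at once. -/
theorem one_sub_mul_rpow_add_le {c γ t₀ t₁ : ℝ} (ht : t₀ ≤ t₁)
    (hpos : ∀ s ∈ Icc t₀ t₁, 0 < V s) (hV : ∀ s ∈ Icc t₀ t₁, HasDerivAt V (V' s) s)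
    (hdec : ∀ s ∈ Icc t₀ t₁, V' s ≤ -(c * V s ^ γ)) :
    (1 - γ) * V t₁ ^ (1 - γ) + c * (1 - γ) ^ 2 * (t₁ - t₀) ≤ (1 - γ) * V t₀ ^ (1 - γ) := by
  set k := 1 - γ
  have hderiv : ∀ s ∈ Icc t₀ t₁, HasDerivAt (fun s => k * V s ^ k + c * k ^ 2 * s)
      (k * (V' s * k * V s ^ (k - 1)) + c * k ^ 2) s := fun s hs =>
    (((hV s hs).rpow_const (Or.inl (hpos s hs).ne')).const_mul k).add
      ((hasDerivAt_id s).const_mul (c * k ^ 2) |>.congr_deriv (mul_one _))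
  have hanti : AntitoneOn (fun s => k * V s ^ k + c * k ^ 2 * s) (Icc t₀ t₁) := by
    refine antitoneOn_of_hasDerivWithinAt_nonpos (convex_Icc t₀ t₁)
      (fun s hs => (hderiv s hs).continuousAt.continuousWithinAt)
      (fun s hs => (hderiv s (interior_subset hs)).hasDerivWithinAt) fun s hs => ?_
    have hs := interior_subset hs
    have hcancel : V s ^ (k - 1) * V s ^ γ = 1 := by
      rw [← Real.rpow_add (hpos s hs), show k - 1 + γ = 0 by ring, Real.rpow_zero]
    have hw : 0 ≤ k ^ 2 * V s ^ (k - 1) := by have := (hpos s hs).le; positivity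
    have := mul_le_mul_of_nonneg_left (hdec s hs) hw
    linear_combination this - c * k ^ 2 * hcancel
  have := hanti (left_mem_Icc.mpr ht) (right_mem_Icc.mpr ht) ht
  simp only at this
  linarith

theorem eq_zero_of_hasDerivAt_le_neg_rpow_add_rpow {a b α β : ℝ} (ha : 0 < a) (hb : 0 < b)
    (hα : α < 1) (hβ : 1 < β) (hV₀ : ∀ t ≥ 0, 0 ≤ V t) (hV : ∀ t ≥ 0, HasDerivAt V (V' t) t)
    (hdec : ∀ t ≥ 0, V' t ≤ -(a * V t ^ α + b * V t ^ β)) :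
    ∀ t, 1 / (a * (1 - α)) + 1 / (b * (β - 1)) ≤ t → V t = 0 := by
  intro t ht
  set T₁ := 1 / (b * (β - 1))
  set T₂ := 1 / (a * (1 - α))
  have hT₁ : 0 < T₁ := one_div_pos.mpr (mul_pos hb (sub_pos.mpr hβ))
  have hT₂ : 0 < T₂ := one_div_pos.mpr (mul_pos ha (sub_pos.mpr hα))
  have hbT₁ : b * (β - 1) * T₁ = 1 := mul_one_div_cancel (by positivity)
  have haT₂ : a * (1 - α) * T₂ = 1 := mul_one_div_cancel (by positivity)
  clear_value T₁ T₂
  have hdec_α : ∀ s ≥ 0, V' s ≤ -(a * V s ^ α) := fun s hs => by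
    have := hV₀ s hs; have := hdec s hs; have : 0 ≤ b * V s ^ β := by positivity
    linarith
  have hdec_β : ∀ s ≥ 0, V' s ≤ -(b * V s ^ β) := fun s hs => by
    have := hV₀ s hs; have := hdec s hs; have : 0 ≤ a * V s ^ α := by positivity
    linarith
  have hanti : AntitoneOn V (Ici 0) := by
    refine antitoneOn_of_hasDerivWithinAt_nonpos (convex_Ici 0)
      (fun s hs => (hV s hs).continuousAt.continuousWithinAt)
      (fun s hs => (hV s (interior_subset hs)).hasDerivWithinAt) fun s hs => ?_
    have hs : 0 ≤ s := interior_subset hs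
    have := hV₀ s hs
    linarith [hdec_α s hs, show 0 ≤ a * V s ^ α by positivity]
  by_contra hne
  have hVt : 0 < V t := lt_of_le_of_ne (hV₀ t (by linarith)) (Ne.symm hne)
  have hpos : ∀ s ∈ Icc 0 t, 0 < V s := fun s hs =>
    hVt.trans_le (hanti hs.1 (hs.1.trans hs.2) hs.2)
  have hVT₁ : V T₁ ≤ 1 := by
    have key := one_sub_mul_rpow_add_le hT₁.le
      (fun s hs => hpos s ⟨hs.1, by linarith [hs.2]⟩)
      (fun s hs => hV s hs.1) (fun s hs => hdec_β s hs.1)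
    have h0 : 0 < V 0 ^ (1 - β) := Real.rpow_pos_of_pos (hpos 0 ⟨le_rfl, by linarith⟩) _
    by_contra! h
    have : V T₁ ^ (1 - β) ≤ 1 := Real.rpow_le_one_of_one_le_of_nonpos h.le (by linarith)
    nlinarith
  have key := one_sub_mul_rpow_add_le (show T₁ ≤ t by linarith)
    (fun s hs => hpos s ⟨hT₁.le.trans hs.1, hs.2⟩)
    (fun s hs => hV s (hT₁.le.trans hs.1)) (fun s hs => hdec_α s (hT₁.le.trans hs.1))
  have hT₁' : V T₁ ^ (1 - α) ≤ 1 :=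
    Real.rpow_le_one (hpos T₁ ⟨hT₁.le, by linarith⟩).le hVT₁ (by linarith)
  have ht' : 0 < V t ^ (1 - α) := Real.rpow_pos_of_pos hVt _
  have hrate : 1 - α ≤ a * (1 - α) ^ 2 * (t - T₁) := by
    have : 0 ≤ a * (1 - α) * (1 - α) * (t - T₁ - T₂) := by
      have : 0 < 1 - α := by linarith
      have : 0 ≤ t - T₁ - T₂ := by linarith
      positivity
    linear_combination this - (1 - α) * haT₂
  nlinarith

variable {E : Type*} [NormedAddCommGroup E] [InnerProductSpace ℝ E]

theorem eq_zero_of_hasDerivAt_neg_of_inner_ge {σ ρ p q : ℝ} (hσ : 0 < σ) (hρ : 0 < ρ) (hp : p < 1)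
    (hq : 1 < q) {g : E → E} (hg : ∀ y, σ * ‖y‖ ^ (1 + p) + ρ * ‖y‖ ^ (1 + q) ≤ ⟪g y, y⟫)
    {y : ℝ → E} (hy : ∀ t ≥ 0, HasDerivAt y (-g (y t)) t) :
    ∀ t, 1 / (σ * (1 - p)) + 1 / (ρ * (q - 1)) ≤ t → y t = 0 := by
  intro t ht
  have hV : ∀ s ≥ 0, HasDerivAt (‖y ·‖ ^ 2) (-(2 * ⟪g (y s), y s⟫)) s := fun s hs => by
    simpa [real_inner_comm] using (hy s hs).norm_sq
  have hdec : ∀ s ≥ 0, -(2 * ⟪g (y s), y s⟫) ≤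
      -(2 * σ * (‖y s‖ ^ 2) ^ ((1 + p) / 2) + 2 * ρ * (‖y s‖ ^ 2) ^ ((1 + q) / 2)) := fun s _ => by
    rw [Real.sq_rpow_div_two (norm_nonneg _), Real.sq_rpow_div_two (norm_nonneg _)]
    linarith [hg (y s)]
  have := eq_zero_of_hasDerivAt_le_neg_rpow_add_rpow (by positivity) (by positivity)
    (by linarith) (by linarith) (fun s _ => by positivity) hV hdec t
    (by convert ht using 3 <;> ring)
  simpa using this

end FixedTime

theorem time_varying_newton_fxtgf_tracking_general
    {n : ℕ} (f : ℝ → EuclideanSpace ℝ (Fin n) → ℝ)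
    (hf : ∀ t ≥ (0:ℝ), ContDiff ℝ 2 (f t))
    (hpd : ∀ t ≥ (0:ℝ), ∀ z h, h ≠ 0 → 0 < ⟪fderiv ℝ (gradient (f t)) z h, h⟫)
    (xstar : ℝ → EuclideanSpace ℝ (Fin n))
    (huniq : ∀ t ≥ (0:ℝ), ∀ z, (∀ w, f t z ≤ f t w) → z = xstar t)
    (σ ρ p q : ℝ) (hσ : 0 < σ) (hρ : 0 < ρ) (hp : p ∈ Set.Ico (0:ℝ) 1) (hq : 1 < q)
    (g : EuclideanSpace ℝ (Fin n) → EuclideanSpace ℝ (Fin n))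
    (hg : ∀ y, σ * ‖y‖ ^ (1 + p) + ρ * ‖y‖ ^ (1 + q) ≤ ⟪g y, y⟫)
    (x : ℝ → EuclideanSpace ℝ (Fin n))
    (hy : ∀ t ≥ (0:ℝ),
      HasDerivAt (fun s => gradient (f s) (x s)) (-(g (gradient (f t) (x t)))) t) :
    ∀ t : ℝ, 1 / (σ * (1 - p)) + 1 / (ρ * (q - 1)) ≤ t → x t = xstar t := by
  intro t ht
  have ht₀ : 0 ≤ t := le_trans (add_nonneg
    (one_div_nonneg.mpr (mul_pos hσ (sub_pos.mpr hp.2)).le)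
    (one_div_nonneg.mpr (mul_pos hρ (sub_pos.mpr hq)).le)) ht
  have hcrit : gradient (f t) (x t) = 0 :=
    eq_zero_of_hasDerivAt_neg_of_inner_ge hσ hρ hp.2 hq hg hy t ht
  have hpsd : ∀ z h, 0 ≤ ⟪fderiv ℝ (gradient (f t)) z h, h⟫ := fun z h => by
    rcases eq_or_ne h 0 with rfl | hh
    · simp
    · exact (hpd t ht₀ z h hh).le
  exact huniq t ht₀ (x t) (le_of_gradient_eq_zero (hf t ht₀) hpsd hcrit)

/-- Proposition 4: fixed-time tracking of the optimal trajectory by the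
time-varying Newton-based FxT gradient flow. -/
theorem time_varying_newton_fxtgf_tracking
    {n : ℕ} (f : ℝ → EuclideanSpace ℝ (Fin n) → ℝ)
    (hf : ∀ t ≥ (0:ℝ), ContDiff ℝ 2 (f t))
    (hpd : ∀ t ≥ (0:ℝ), ∀ z h, h ≠ 0 → 0 < ⟪fderiv ℝ (gradient (f t)) z h, h⟫)
    (xstar : ℝ → EuclideanSpace ℝ (Fin n))
    (hmin : ∀ t ≥ (0:ℝ), ∀ z, f t (xstar t) ≤ f t z)
    (huniq : ∀ t ≥ (0:ℝ), ∀ z, (∀ w, f t z ≤ f t w) → z = xstar t)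
    (σ ρ p q : ℝ) (hσ : 0 < σ) (hρ : 0 < ρ) (hp : p ∈ Set.Ico (0:ℝ) 1) (hq : 1 < q)
    (g : EuclideanSpace ℝ (Fin n) → EuclideanSpace ℝ (Fin n))
    (hg : ∀ y, σ * ‖y‖ ^ (1 + p) + ρ * ‖y‖ ^ (1 + q) ≤ ⟪g y, y⟫)
    (x : ℝ → EuclideanSpace ℝ (Fin n))
    (hy : ∀ t ≥ (0:ℝ),
      HasDerivAt (fun s => gradient (f s) (x s)) (-(g (gradient (f t) (x t)))) t) :
    ∀ t : ℝ, 1 / (σ * (1 - p)) + 1 / (ρ * (q - 1)) ≤ t → x t = xstar t :=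
  time_varying_newton_fxtgf_tracking_general f hf hpd xstar huniq σ ρ p q hσ hρ hp hq g hg x hy
end

section
/- Let A ∈ ℝ^{m×n} and b ∈ ℝ^m with b in the range of A. Let ĝ : ℝ^m → ℝ^m satisfy ĝ(y) ∈ span{y} for every y ∈ ℝ^m, and ⟨ĝ(y), y⟩ ≥ σ‖y‖₂^{1+p} + ρ‖y‖₂^{1+q} for all y, where σ, ρ > 0, p ∈ [0,1), q > 1. Let λ > 0 be such that every nonzero eigenvalue of AAᵀ is at least λ. If x : [0,∞) → ℝ^n is differentiable and x′(t) = −Aᵀ·ĝ(A·x(t) − b) for all t ≥ 0, then A·x(t) = b for all t ≥ T, where T = 1/(σλ(1−p)) + 1/(ρλ(q−1)); the settling time is bounded uniformly in x(0). (Proposition 6.) -/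
open scoped RealInnerProductSpace

private lemma deriv_sub_le {f f' : ℝ → ℝ} {a b C : ℝ} (hab : a ≤ b)
    (hd : ∀ t ∈ Set.Icc a b, HasDerivAt f (f' t) t)
    (hC : ∀ t ∈ Set.Icc a b, f' t ≤ C) : f b - f a ≤ C * (b - a) :=
  (convex_Icc a b).image_sub_le_mul_sub_of_deriv_le
    (fun t ht => (hd t ht).continuousAt.continuousWithinAt)
    (fun t ht => ((hd t (interior_subset ht)).differentiableAt).differentiableWithinAt)
    (fun t ht => by rw [(hd t (interior_subset ht)).deriv]; exact hC t (interior_subset ht))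
    a (Set.left_mem_Icc.2 hab) b (Set.right_mem_Icc.2 hab) hab

private lemma deriv_sub_ge {f f' : ℝ → ℝ} {a b C : ℝ} (hab : a ≤ b)
    (hd : ∀ t ∈ Set.Icc a b, HasDerivAt f (f' t) t)
    (hC : ∀ t ∈ Set.Icc a b, C ≤ f' t) : C * (b - a) ≤ f b - f a :=
  (convex_Icc a b).mul_sub_le_image_sub_of_le_deriv
    (fun t ht => (hd t ht).continuousAt.continuousWithinAt)
    (fun t ht => ((hd t (interior_subset ht)).differentiableAt).differentiableWithinAt)
    (fun t ht => by rw [(hd t (interior_subset ht)).deriv]; exact hC t (interior_subset ht))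
    a (Set.left_mem_Icc.2 hab) b (Set.right_mem_Icc.2 hab) hab

private lemma quad_lower {n m : ℕ}
    (A : EuclideanSpace ℝ (Fin n) →L[ℝ] EuclideanSpace ℝ (Fin m))
    {lam : ℝ}
    (heig : ∀ (c : ℝ) (v : EuclideanSpace ℝ (Fin m)), v ≠ 0 → c ≠ 0 →
      (A ∘L ContinuousLinearMap.adjoint A) v = c • v → lam ≤ c)
    (u : EuclideanSpace ℝ (Fin n)) :
    lam * ⟪A u, A u⟫ ≤ ⟪(A ∘L ContinuousLinearMap.adjoint A) (A u), A u⟫ := by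
  set T := A ∘L ContinuousLinearMap.adjoint A with hTdef
  have hsa : IsSelfAdjoint T := by
    rw [ContinuousLinearMap.isSelfAdjoint_iff', hTdef, ContinuousLinearMap.adjoint_comp,
      ContinuousLinearMap.adjoint_adjoint]
  have hsym : (T : EuclideanSpace ℝ (Fin m) →ₗ[ℝ] EuclideanSpace ℝ (Fin m)).IsSymmetric :=
    hsa.isSymmetric
  have hm : Module.finrank ℝ (EuclideanSpace ℝ (Fin m)) = m := finrank_euclideanSpace_fin
  set B := hsym.eigenvectorBasis hm with hB
  set μ := hsym.eigenvalues hm with hμ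
  have hTadj : ContinuousLinearMap.adjoint T = T := by
    rw [← ContinuousLinearMap.star_eq_adjoint]; exact hsa.star_eq
  have hTa : ∀ v w : EuclideanSpace ℝ (Fin m), ⟪T v, w⟫ = ⟪v, T w⟫ := fun v w => by
    have h := ContinuousLinearMap.adjoint_inner_left T w v
    rwa [hTadj] at h
  have happ : ∀ i, T (B i) = μ i • B i := fun i => by
    exact_mod_cast hsym.apply_eigenvectorBasis hm i
  have hzero : ∀ i, μ i = 0 → ⟪B i, A u⟫ = 0 := by
    intro i hi
    have h1 : ContinuousLinearMap.adjoint A (B i) = 0 := by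
      have h2 : ⟪ContinuousLinearMap.adjoint A (B i), ContinuousLinearMap.adjoint A (B i)⟫ = 0 := by
        rw [ContinuousLinearMap.adjoint_inner_left]
        have h3 : A (ContinuousLinearMap.adjoint A (B i)) = T (B i) := rfl
        rw [h3, happ i, hi, zero_smul, inner_zero_right]
      exact inner_self_eq_zero.mp h2
    rw [← ContinuousLinearMap.adjoint_inner_left, h1, inner_zero_left]
  have hv1 : ⟪T (A u), A u⟫ = ∑ i, μ i * ⟪B i, A u⟫ ^ 2 := by
    rw [← B.sum_inner_mul_inner (T (A u)) (A u)]
    refine Finset.sum_congr rfl fun i _ => ?_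
    rw [hTa (A u) (B i), happ i, inner_smul_right, real_inner_comm (A u) (B i)]
    ring
  have hv2 : ⟪A u, A u⟫ = ∑ i, ⟪B i, A u⟫ ^ 2 := by
    rw [← B.sum_inner_mul_inner (A u) (A u)]
    refine Finset.sum_congr rfl fun i _ => ?_
    rw [real_inner_comm (A u) (B i)]; ring
  rw [hv1, hv2, Finset.mul_sum]
  refine Finset.sum_le_sum fun i _ => ?_
  rcases eq_or_ne (⟪B i, A u⟫ : ℝ) 0 with h | h
  · simp [h]
  · have hμi : μ i ≠ 0 := fun h0 => h (hzero i h0)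
    have hBi : B i ≠ 0 := B.toBasis.ne_zero i
    have := heig (μ i) (B i) hBi hμi (happ i)
    exact mul_le_mul_of_nonneg_right this (sq_nonneg _)

set_option maxHeartbeats 1600000 in
/-- Proposition 6: fixed-time convergence of x' = -Aᵀ ĝ(Ax - b) to a solution
of the linear equation Ax = b. -/
theorem linear_equation_fxt_flow
    {n m : ℕ}
    (A : EuclideanSpace ℝ (Fin n) →L[ℝ] EuclideanSpace ℝ (Fin m))
    (b : EuclideanSpace ℝ (Fin m)) (hfeas : ∃ z, A z = b)
    (σ ρ p q : ℝ) (hσ : 0 < σ) (hρ : 0 < ρ) (hp : p ∈ Set.Ico (0:ℝ) 1) (hq : 1 < q)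
    (gh : EuclideanSpace ℝ (Fin m) → EuclideanSpace ℝ (Fin m))
    (hspan : ∀ y, ∃ c : ℝ, gh y = c • y)
    (hg : ∀ y, σ * ‖y‖ ^ (1 + p) + ρ * ‖y‖ ^ (1 + q) ≤ ⟪gh y, y⟫)
    (lam : ℝ) (hlam : 0 < lam)
    (heig : ∀ (c : ℝ) (v : EuclideanSpace ℝ (Fin m)), v ≠ 0 → c ≠ 0 →
      (A ∘L ContinuousLinearMap.adjoint A) v = c • v → lam ≤ c)
    (x : ℝ → EuclideanSpace ℝ (Fin n))
    (hx : ∀ t ≥ (0:ℝ),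
      HasDerivAt x (-(ContinuousLinearMap.adjoint A (gh (A (x t) - b)))) t) :
    ∀ t : ℝ, 1 / (σ * lam * (1 - p)) + 1 / (ρ * lam * (q - 1)) ≤ t →
      A (x t) = b := by
  obtain ⟨hp0, hp1⟩ := hp
  obtain ⟨z, hz⟩ := hfeas
  set y : ℝ → EuclideanSpace ℝ (Fin m) := fun t => A (x t) - b with hydef
  set w : ℝ → EuclideanSpace ℝ (Fin m) :=
    fun t => A (ContinuousLinearMap.adjoint A (gh (y t))) with hwdef
  have hyd : ∀ t, 0 ≤ t → HasDerivAt y (-(w t)) t := by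
    intro t ht
    have h1 := (A.hasFDerivAt.comp_hasDerivAt t (hx t ht)).sub_const b
    have h3 : A (-(ContinuousLinearMap.adjoint A (gh (A (x t) - b)))) = -(w t) := by
      rw [map_neg]
    rw [h3] at h1
    exact h1
  set V : ℝ → ℝ := fun t => ⟪y t, y t⟫ with hVdef
  set d : ℝ → ℝ := fun t => -(2 * ⟪w t, y t⟫) with hddef
  have hVd : ∀ t, 0 ≤ t → HasDerivAt V (d t) t := by
    intro t ht
    have h1 := HasDerivAt.inner ℝ (hyd t ht) (hyd t ht)
    have h2 : (⟪y t, -(w t)⟫ : ℝ) + ⟪-(w t), y t⟫ = d t := by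
      have h3 : d t = -(2 * ⟪w t, y t⟫) := rfl
      rw [h3, inner_neg_right, inner_neg_left, real_inner_comm (y t) (w t)]
      ring
    rwa [h2] at h1
  -- the range fact
  have hyr : ∀ t, y t = A (x t - z) := by
    intro t; rw [map_sub, hz]
  -- key derivative bound
  have hkey : ∀ t, y t ≠ 0 →
      d t ≤ -(2 * lam) * (σ * ‖y t‖ ^ (1 + p) + ρ * ‖y t‖ ^ (1 + q)) := by
    intro t hne
    obtain ⟨c, hc⟩ := hspan (y t)
    have hr : (0:ℝ) < ‖y t‖ := norm_pos_iff.mpr hne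
    have hrp : (0:ℝ) < ‖y t‖ ^ (1 + p) := Real.rpow_pos_of_pos hr _
    have hrq : (0:ℝ) < ‖y t‖ ^ (1 + q) := Real.rpow_pos_of_pos hr _
    have hS : (0:ℝ) < σ * ‖y t‖ ^ (1 + p) + ρ * ‖y t‖ ^ (1 + q) := by positivity
    have hgy : (⟪gh (y t), y t⟫ : ℝ) = c * ⟪y t, y t⟫ := by
      rw [hc, real_inner_smul_left]
    have hyy : (0:ℝ) < ⟪y t, y t⟫ := by
      rw [real_inner_self_eq_norm_sq]; positivity
    have hcpos : 0 < c := by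
      have := hg (y t)
      rw [hgy] at this
      nlinarith
    have hwy : (⟪w t, y t⟫ : ℝ) = c * ⟪A (ContinuousLinearMap.adjoint A (y t)), y t⟫ := by
      simp only [hwdef, hc, map_smul]
      exact real_inner_smul_left _ _ _
    have hquad : lam * ⟪y t, y t⟫ ≤ ⟪A (ContinuousLinearMap.adjoint A (y t)), y t⟫ := by
      have h := quad_lower A heig (x t - z)
      rw [← hyr t] at h
      exact h
    have hlow : lam * (σ * ‖y t‖ ^ (1 + p) + ρ * ‖y t‖ ^ (1 + q)) ≤ ⟪w t, y t⟫ := by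
      have h1 : lam * ⟪gh (y t), y t⟫ ≤ ⟪w t, y t⟫ := by
        rw [hwy, hgy]
        calc lam * (c * ⟪y t, y t⟫) = c * (lam * ⟪y t, y t⟫) := by ring
          _ ≤ c * ⟪A (ContinuousLinearMap.adjoint A (y t)), y t⟫ :=
            mul_le_mul_of_nonneg_left hquad hcpos.le
      calc lam * (σ * ‖y t‖ ^ (1 + p) + ρ * ‖y t‖ ^ (1 + q)) ≤ lam * ⟪gh (y t), y t⟫ :=
          mul_le_mul_of_nonneg_left (hg (y t)) hlam.le
        _ ≤ ⟪w t, y t⟫ := h1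
    simp only [hddef]
    nlinarith
  have hd0 : ∀ t, y t = 0 → d t = 0 := by
    intro t h0
    obtain ⟨c, hc⟩ := hspan (y t)
    have : w t = 0 := by
      simp only [hwdef, h0] at hc ⊢
      rw [hc]; simp
    simp [hddef, this]
  have hdnp : ∀ t, d t ≤ 0 := by
    intro t
    rcases eq_or_ne (y t) 0 with h | h
    · rw [hd0 t h]
    · have h1 := hkey t h
      have hr : (0:ℝ) < ‖y t‖ := norm_pos_iff.mpr h
      have hrp : (0:ℝ) < ‖y t‖ ^ (1 + p) := Real.rpow_pos_of_pos hr _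
      have hrq : (0:ℝ) < ‖y t‖ ^ (1 + q) := Real.rpow_pos_of_pos hr _
      nlinarith [mul_pos hσ hrp, mul_pos hρ hrq, hlam]
  have hmono : ∀ s t : ℝ, 0 ≤ s → s ≤ t → V t ≤ V s := by
    intro s t hs hst
    have h := deriv_sub_le hst (fun u hu => hVd u (hs.trans hu.1)) (fun u hu => hdnp u)
    rw [zero_mul] at h
    linarith
  have hVnn : ∀ t, 0 ≤ V t := by
    intro t
    show (0:ℝ) ≤ ⟪y t, y t⟫
    rw [real_inner_self_eq_norm_sq]; positivity
  have hVr : ∀ t, y t ≠ 0 → ∀ e : ℝ, (V t) ^ e = ‖y t‖ ^ (2 * e) := by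
    intro t h e
    have hr : (0:ℝ) < ‖y t‖ := norm_pos_iff.mpr h
    show (⟪y t, y t⟫ : ℝ) ^ e = _
    rw [real_inner_self_eq_norm_sq, ← Real.rpow_natCast ‖y t‖ 2, ← Real.rpow_mul hr.le]
    norm_num
  set K1 := σ * lam * (1 - p) with hK1def
  set K2 := ρ * lam * (q - 1) with hK2def
  have hK1 : 0 < K1 := by rw [hK1def]; have : 0 < 1 - p := by linarith
                          positivity
  have hK2 : 0 < K2 := by rw [hK2def]; have : 0 < q - 1 := by linarith
                          positivity
  set T0 := 1 / K1 + 1 / K2 with hT0def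
  set t1 := 1 / K2 with ht1def
  have ht1 : 0 < t1 := by rw [ht1def]; positivity
  have ht1T0 : t1 ≤ T0 := by
    rw [hT0def, ht1def]
    have : 0 < 1 / K1 := by positivity
    linarith
  have hT0pos : 0 < T0 := lt_of_lt_of_le ht1 ht1T0
  have hmain : y T0 = 0 := by
    by_contra hne
    have hVT0 : 0 < V T0 := by
      show (0:ℝ) < ⟪y T0, y T0⟫
      rw [real_inner_self_eq_norm_sq]
      have : 0 < ‖y T0‖ := norm_pos_iff.mpr hne
      positivity
    have hVpos : ∀ t ∈ Set.Icc (0:ℝ) T0, 0 < V t := fun t ht =>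
      lt_of_lt_of_le hVT0 (hmono t T0 ht.1 ht.2)
    have hyne : ∀ t ∈ Set.Icc (0:ℝ) T0, y t ≠ 0 := by
      intro t ht h0
      have h1 := hVpos t ht
      have h2 : V t = 0 := by show (⟪y t, y t⟫:ℝ) = 0; rw [h0]; simp
      linarith
    -- Phase 1
    set e1 := (1 - q) / 2 with he1def
    have he1neg : e1 < 0 := by rw [he1def]; linarith
    have hUge : ∀ t ∈ Set.Icc (0:ℝ) t1, K2 ≤ d t * e1 * (V t) ^ (e1 - 1) := by
      intro t ht
      have htT : t ∈ Set.Icc (0:ℝ) T0 := ⟨ht.1, ht.2.trans ht1T0⟩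
      have hne' := hyne t htT
      have hr : (0:ℝ) < ‖y t‖ := norm_pos_iff.mpr hne'
      have hrp : (0:ℝ) < ‖y t‖ ^ (1 + p) := Real.rpow_pos_of_pos hr _
      have hrq : (0:ℝ) < ‖y t‖ ^ (1 + q) := Real.rpow_pos_of_pos hr _
      have hVm : (V t) ^ (e1 - 1) = ‖y t‖ ^ (-1 - q) := by
        rw [hVr t hne' (e1 - 1)]
        congr 1
        rw [he1def]; ring
      have hm : (0:ℝ) < ‖y t‖ ^ (-1 - q) := Real.rpow_pos_of_pos hr _
      have hrm : ‖y t‖ ^ (1 + q) * ‖y t‖ ^ (-1 - q) = 1 := by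
        rw [← Real.rpow_add hr, show (1 + q) + (-1 - q) = 0 by ring, Real.rpow_zero]
      have hd1 : d t ≤ -(2 * lam * ρ) * ‖y t‖ ^ (1 + q) := by
        have := hkey t hne'
        nlinarith [mul_pos hσ hrp]
      have hem : e1 * ‖y t‖ ^ (-1 - q) ≤ 0 :=
        (mul_neg_of_neg_of_pos he1neg hm).le
      have h5 : (-(2 * lam * ρ) * ‖y t‖ ^ (1 + q)) * (e1 * ‖y t‖ ^ (-1 - q)) ≤
          d t * (e1 * ‖y t‖ ^ (-1 - q)) := mul_le_mul_of_nonpos_right hd1 hem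
      have h6 : (-(2 * lam * ρ) * ‖y t‖ ^ (1 + q)) * (e1 * ‖y t‖ ^ (-1 - q)) = K2 := by
        have h7 : (-(2 * lam * ρ) * ‖y t‖ ^ (1 + q)) * (e1 * ‖y t‖ ^ (-1 - q)) =
            (-(2 * lam * ρ) * e1) * (‖y t‖ ^ (1 + q) * ‖y t‖ ^ (-1 - q)) := by ring
        rw [h7, hrm, he1def, hK2def]; ring
      rw [hVm]
      calc K2 = (-(2 * lam * ρ) * ‖y t‖ ^ (1 + q)) * (e1 * ‖y t‖ ^ (-1 - q)) := h6.symm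
        _ ≤ d t * (e1 * ‖y t‖ ^ (-1 - q)) := h5
        _ = d t * e1 * ‖y t‖ ^ (-1 - q) := by ring
    have hUD : ∀ t ∈ Set.Icc (0:ℝ) t1,
        HasDerivAt (fun s => (V s) ^ e1) (d t * e1 * (V t) ^ (e1 - 1)) t := by
      intro t ht
      have htT : t ∈ Set.Icc (0:ℝ) T0 := ⟨ht.1, ht.2.trans ht1T0⟩
      exact (hVd t ht.1).rpow_const (Or.inl (ne_of_gt (hVpos t htT)))
    have hU1 := deriv_sub_ge ht1.le hUD hUge
    have hK2t1 : K2 * (t1 - 0) = 1 := by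
      rw [ht1def, sub_zero]
      field_simp
    have hU0pos : 0 < (V 0) ^ e1 :=
      Real.rpow_pos_of_pos (hVpos 0 ⟨le_refl _, hT0pos.le⟩) _
    have hUt1 : 1 ≤ (V t1) ^ e1 := by
      rw [hK2t1] at hU1
      linarith
    have hVt1le : V t1 ≤ 1 := by
      by_contra h
      push_neg at h
      have := Real.rpow_lt_one_of_one_lt_of_neg h he1neg
      linarith
    -- Phase 2
    set e2 := (1 - p) / 2 with he2def
    have he2pos : 0 < e2 := by rw [he2def]; linarith
    have hWle : ∀ t ∈ Set.Icc t1 T0, d t * e2 * (V t) ^ (e2 - 1) ≤ -K1 := by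
      intro t ht
      have htT : t ∈ Set.Icc (0:ℝ) T0 := ⟨ht1.le.trans ht.1, ht.2⟩
      have hne' := hyne t htT
      have hr : (0:ℝ) < ‖y t‖ := norm_pos_iff.mpr hne'
      have hrp : (0:ℝ) < ‖y t‖ ^ (1 + p) := Real.rpow_pos_of_pos hr _
      have hrq : (0:ℝ) < ‖y t‖ ^ (1 + q) := Real.rpow_pos_of_pos hr _
      have hVm : (V t) ^ (e2 - 1) = ‖y t‖ ^ (-1 - p) := by
        rw [hVr t hne' (e2 - 1)]
        congr 1
        rw [he2def]; ring
      have hm : (0:ℝ) < ‖y t‖ ^ (-1 - p) := Real.rpow_pos_of_pos hr _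
      have hrm : ‖y t‖ ^ (1 + p) * ‖y t‖ ^ (-1 - p) = 1 := by
        rw [← Real.rpow_add hr, show (1 + p) + (-1 - p) = 0 by ring, Real.rpow_zero]
      have hd1 : d t ≤ -(2 * lam * σ) * ‖y t‖ ^ (1 + p) := by
        have := hkey t hne'
        nlinarith [mul_pos hρ hrq]
      have hem : 0 ≤ e2 * ‖y t‖ ^ (-1 - p) := (mul_pos he2pos hm).le
      have h5 : d t * (e2 * ‖y t‖ ^ (-1 - p)) ≤
          (-(2 * lam * σ) * ‖y t‖ ^ (1 + p)) * (e2 * ‖y t‖ ^ (-1 - p)) :=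
        mul_le_mul_of_nonneg_right hd1 hem
      have h6 : (-(2 * lam * σ) * ‖y t‖ ^ (1 + p)) * (e2 * ‖y t‖ ^ (-1 - p)) = -K1 := by
        have h7 : (-(2 * lam * σ) * ‖y t‖ ^ (1 + p)) * (e2 * ‖y t‖ ^ (-1 - p)) =
            (-(2 * lam * σ) * e2) * (‖y t‖ ^ (1 + p) * ‖y t‖ ^ (-1 - p)) := by ring
        rw [h7, hrm, he2def, hK1def]; ring
      rw [hVm]
      calc d t * e2 * ‖y t‖ ^ (-1 - p) = d t * (e2 * ‖y t‖ ^ (-1 - p)) := by ring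
        _ ≤ (-(2 * lam * σ) * ‖y t‖ ^ (1 + p)) * (e2 * ‖y t‖ ^ (-1 - p)) := h5
        _ = -K1 := h6
    have hWD : ∀ t ∈ Set.Icc t1 T0,
        HasDerivAt (fun s => (V s) ^ e2) (d t * e2 * (V t) ^ (e2 - 1)) t := by
      intro t ht
      have htT : t ∈ Set.Icc (0:ℝ) T0 := ⟨ht1.le.trans ht.1, ht.2⟩
      exact (hVd t (ht1.le.trans ht.1)).rpow_const (Or.inl (ne_of_gt (hVpos t htT)))
    have hW1 := deriv_sub_le ht1T0 hWD hWle
    have hK1T : -K1 * (T0 - t1) = -1 := by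
      rw [hT0def, ht1def]
      field_simp
      ring
    have hWt1 : (V t1) ^ e2 ≤ 1 :=
      Real.rpow_le_one (hVnn t1) hVt1le he2pos.le
    have hWT0 : 0 < (V T0) ^ e2 := Real.rpow_pos_of_pos hVT0 _
    rw [hK1T] at hW1
    linarith
  intro t hT0t
  have h9 : V t ≤ V T0 := hmono T0 t hT0pos.le hT0t
  have hVT00 : V T0 = 0 := by
    show (⟪y T0, y T0⟫ : ℝ) = 0
    rw [hmain]; simp
  have h10 : (⟪y t, y t⟫ : ℝ) = 0 := le_antisymm (by rw [← hVT00]; exact h9) (hVnn t)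
  have hy0 : y t = 0 := inner_self_eq_zero.mp h10
  have : A (x t) - b = 0 := hy0
  exact sub_eq_zero.mp this
end

section
/- Let A ∈ ℝ^{m×n}, b ∈ ℝ^m with b in the range of A, let f : ℝ^n → ℝ be continuously differentiable and μ-strongly convex (μ > 0), and set f* = min{f(z) : Az = b}. Let P ∈ ℝ^{n×n} satisfy range(P) = null(A). Let g : ℝ^n → ℝ^n satisfy ⟨g(y), y⟩ ≥ σ‖y‖₂^{1+p} + ρ‖y‖₂^{1+q} for all y (σ, ρ > 0, p ∈ [0,1), q > 1), and let ĝ : ℝ^m → ℝ^m satisfy ĝ(y) ∈ span{y} and ⟨ĝ(y), y⟩ ≥ σ̂‖y‖₂^{1+p̂} + ρ̂‖y‖₂^{1+q̂} for all y (σ̂, ρ̂ > 0, p̂ ∈ [0,1), q̂ > 1). Let λ_P > 0 lower-bound all nonzero eigenvalues of PᵀP and λ_A > 0 lower-bound all nonzero eigenvalues of AAᵀ. Then there exists T ≥ 0, depending only on μ, λ_P, λ_A, σ, ρ, p, q, σ̂, ρ̂, p̂, q̂ (and not on the initial condition), such that every differentiable x : [0,∞) → ℝ^n with x′(t) = −P·g(Pᵀ∇f(x(t)))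 − Aᵀ·ĝ(A·x(t) − b) for all t ≥ 0 satisfies A·x(t) = b and f(x(t)) = f* for all t ≥ T. (Theorem 4: projected FxT gradient flow with free initialization.) -/
open scoped RealInnerProductSpace


lemma key_decay (s₁ s₂ C : ℝ) (h12 : s₁ ≤ s₂) (F F' : ℝ → ℝ)
    (hF : ∀ t ∈ Set.Icc s₁ s₂, HasDerivAt F (F' t) t)
    (hC : ∀ t ∈ Set.Icc s₁ s₂, F' t ≤ C) : F s₂ ≤ F s₁ + C * (s₂ - s₁) := by
  set G : ℝ → ℝ := fun t => F t - C * t with hG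
  have hG' : ∀ t ∈ Set.Icc s₁ s₂, HasDerivAt G (F' t - C) t := by
    intro t ht
    have h := (hF t ht).sub ((hasDerivAt_id' t).const_mul C)
    rw [mul_one] at h
    exact h
  have hanti : AntitoneOn G (Set.Icc s₁ s₂) := by
    apply antitoneOn_of_deriv_nonpos (convex_Icc s₁ s₂)
    · exact fun t ht => (hG' t ht).continuousAt.continuousWithinAt
    · intro t ht
      have ht' : t ∈ Set.Icc s₁ s₂ := interior_subset ht
      exact (hG' t ht').differentiableAt.differentiableWithinAt
    · intro t ht
      have ht' : t ∈ Set.Icc s₁ s₂ := interior_subset ht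
      rw [(hG' t ht').deriv]
      linarith [hC t ht']
  have := hanti (Set.left_mem_Icc.2 h12) (Set.right_mem_Icc.2 h12) h12
  simp only [hG] at this
  linarith

lemma key_growth (s₁ s₂ C : ℝ) (h12 : s₁ ≤ s₂) (F F' : ℝ → ℝ)
    (hF : ∀ t ∈ Set.Icc s₁ s₂, HasDerivAt F (F' t) t)
    (hC : ∀ t ∈ Set.Icc s₁ s₂, C ≤ F' t) : F s₁ + C * (s₂ - s₁) ≤ F s₂ := by
  have := key_decay s₁ s₂ (-C) h12 (fun t => -F t) (fun t => -F' t)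
    (fun t ht => (hF t ht).neg) (fun t ht => by linarith [hC t ht])
  linarith

/-- Fixed-time convergence lemma. -/
lemma fxt_lemma (a b α β : ℝ) (ha : 0 < a) (hb : 0 < b)
    (hα0 : 0 < α) (hα1 : α < 1) (hβ : 1 < β)
    (t₀ : ℝ) (V V' : ℝ → ℝ)
    (hd : ∀ t ≥ t₀, HasDerivAt V (V' t) t)
    (hpos : ∀ t ≥ t₀, 0 ≤ V t)
    (hle : ∀ t ≥ t₀, V' t ≤ -a * (V t) ^ α - b * (V t) ^ β) :
    ∀ t ≥ t₀ + (1 / (b * (β - 1)) + 1 / (a * (1 - α))), V t = 0 := by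
  have hbβ : 0 < b * (β - 1) := by nlinarith
  have haα : 0 < a * (1 - α) := by nlinarith
  have hp1 : 0 < 1 / (b * (β - 1)) := one_div_pos.mpr hbβ
  have hp2 : 0 < 1 / (a * (1 - α)) := one_div_pos.mpr haα
  -- V is antitone on [t₀, ∞)
  have hanti : ∀ s₁ s₂, t₀ ≤ s₁ → s₁ ≤ s₂ → V s₂ ≤ V s₁ := by
    intro s₁ s₂ h₁ h₁₂
    have := key_decay s₁ s₂ 0 h₁₂ V V'
      (fun t ht => hd t (le_trans h₁ ht.1))
      (fun t ht => by
        have h0 := hpos t (le_trans h₁ ht.1)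
        have := hle t (le_trans h₁ ht.1)
        have h1 : 0 ≤ (V t) ^ α := Real.rpow_nonneg h0 α
        have h2 : 0 ≤ (V t) ^ β := Real.rpow_nonneg h0 β
        nlinarith)
    linarith
  set t₁ : ℝ := t₀ + 1 / (b * (β - 1)) with ht₁def
  set t₂ : ℝ := t₁ + 1 / (a * (1 - α)) with ht₂def
  have ht₀₁ : t₀ ≤ t₁ := by linarith
  have ht₁₂ : t₁ ≤ t₂ := by rw [ht₂def]; linarith
  -- Phase 1: V t₁ ≤ 1
  have hV1 : V t₁ ≤ 1 := by
    by_contra h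
    push_neg at h
    have hVgt : ∀ t ∈ Set.Icc t₀ t₁, 1 < V t := fun t ht =>
      lt_of_lt_of_le h (hanti t t₁ ht.1 ht.2)
    set U : ℝ → ℝ := fun t => V t ^ (1 - β) with hU
    have hU' : ∀ t ∈ Set.Icc t₀ t₁,
        HasDerivAt U (V' t * (1 - β) * V t ^ (1 - β - 1)) t := by
      intro t ht
      exact (hd t ht.1).rpow_const (Or.inl (by linarith [hVgt t ht]))
    have hUgrow : ∀ t ∈ Set.Icc t₀ t₁, b * (β - 1) ≤ V' t * (1 - β) * V t ^ (1 - β - 1) := by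
      intro t ht
      have hv := hVgt t ht
      have hv0 : (0:ℝ) < V t := by linarith
      have hl := hle t ht.1
      have hw : (0:ℝ) < V t ^ (1 - β - 1) := Real.rpow_pos_of_pos hv0 _
      have hβ0 : V t ^ β * V t ^ (1 - β - 1) = V t ^ (0:ℝ) * V t ^ (β + (1 - β - 1)) := by
        rw [Real.rpow_zero, one_mul, ← Real.rpow_add hv0]
      rw [Real.rpow_zero, one_mul, show β + (1 - β - 1) = 0 by ring, Real.rpow_zero] at hβ0
      have hαnn : 0 ≤ a * ((V t) ^ α * V t ^ (1 - β - 1)) := by positivity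
      have key : (a * (V t) ^ α + b * (V t) ^ β) * V t ^ (1 - β - 1)
          ≤ (-V' t) * V t ^ (1 - β - 1) :=
        mul_le_mul_of_nonneg_right (by linarith) (le_of_lt hw)
      nlinarith [key, hβ0, hαnn]
    have hgrow := key_growth t₀ t₁ (b * (β - 1)) ht₀₁ U _ hU' hUgrow
    have harea : b * (β - 1) * (t₁ - t₀) = 1 := by
      have h' : t₁ - t₀ = 1 / (b * (β - 1)) := by rw [ht₁def]; ring
      rw [h', mul_one_div_cancel (ne_of_gt hbβ)]
    have hU₀ : 0 < U t₀ := Real.rpow_pos_of_pos (by linarith [hVgt t₀ ⟨le_refl _, ht₀₁⟩]) _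
    have hU₁ : U t₁ < 1 := by
      apply Real.rpow_lt_one_of_one_lt_of_neg (hVgt t₁ ⟨ht₀₁, le_refl _⟩)
      linarith
    rw [harea] at hgrow
    linarith
  -- Phase 2: V t₂ = 0
  have hV2 : V t₂ = 0 := by
    by_contra h
    have hv2 : 0 < V t₂ := lt_of_le_of_ne (hpos t₂ (by linarith)) (Ne.symm h)
    have hVgt : ∀ t ∈ Set.Icc t₁ t₂, 0 < V t := fun t ht =>
      lt_of_lt_of_le hv2 (hanti t t₂ (le_trans ht₀₁ ht.1) ht.2)
    set W : ℝ → ℝ := fun t => V t ^ (1 - α) with hW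
    have hW' : ∀ t ∈ Set.Icc t₁ t₂,
        HasDerivAt W (V' t * (1 - α) * V t ^ (1 - α - 1)) t := by
      intro t ht
      exact (hd t (le_trans ht₀₁ ht.1)).rpow_const (Or.inl (ne_of_gt (hVgt t ht)))
    have hWdec : ∀ t ∈ Set.Icc t₁ t₂, V' t * (1 - α) * V t ^ (1 - α - 1) ≤ -(a * (1 - α)) := by
      intro t ht
      have hv0 : (0:ℝ) < V t := hVgt t ht
      have hl := hle t (le_trans ht₀₁ ht.1)
      have hw : (0:ℝ) < V t ^ (1 - α - 1) := Real.rpow_pos_of_pos hv0 _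
      have hβnn : 0 ≤ b * (V t) ^ β := by positivity
      have key : V' t * V t ^ (1 - α - 1) ≤ (-(a * (V t) ^ α)) * V t ^ (1 - α - 1) :=
        mul_le_mul_of_nonneg_right (by linarith) (le_of_lt hw)
      have h1 : V t ^ α * V t ^ (1 - α - 1) = 1 := by
        rw [← Real.rpow_add hv0, show α + (1 - α - 1) = 0 by ring, Real.rpow_zero]
      have h2 : (-(a * (V t) ^ α)) * V t ^ (1 - α - 1) = -a := by
        rw [neg_mul, mul_assoc, h1, mul_one]
      rw [h2] at key
      have := mul_le_mul_of_nonneg_left key (show (0:ℝ) ≤ 1 - α by linarith)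
      nlinarith [this]
    have hdec := key_decay t₁ t₂ (-(a * (1 - α))) ht₁₂ W _ hW' hWdec
    have harea : a * (1 - α) * (t₂ - t₁) = 1 := by
      have h' : t₂ - t₁ = 1 / (a * (1 - α)) := by rw [ht₂def]; ring
      rw [h', mul_one_div_cancel (ne_of_gt haα)]
    have hW₁ : W t₁ ≤ 1 :=
      Real.rpow_le_one (hpos t₁ ht₀₁) hV1 (by linarith)
    have hW₂ : 0 < W t₂ := Real.rpow_pos_of_pos hv2 _
    nlinarith [hdec, harea, hW₁, hW₂]
  intro t ht
  have h1 : V t ≤ V t₂ := hanti t₂ t (by linarith) (by rw [ht₂def, ht₁def]; linarith)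
  have h2 : 0 ≤ V t := hpos t (by linarith)
  linarith [hV2, h1, h2]

/-- Spectral lower bound: if all nonzero eigenvalues of a self-adjoint operator
are at least `lam`, then on the orthogonal complement of its kernel the
quadratic form is bounded below by `lam * ‖v‖²`. -/
lemma spec_lb {k : ℕ} (S : EuclideanSpace ℝ (Fin k) →L[ℝ] EuclideanSpace ℝ (Fin k))
    (hS : ∀ x y, ⟪S x, y⟫ = ⟪x, S y⟫) (lam : ℝ)
    (heig : ∀ (c : ℝ) (v : EuclideanSpace ℝ (Fin k)), v ≠ 0 → c ≠ 0 → S v = c • v → lam ≤ c)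
    (v : EuclideanSpace ℝ (Fin k)) (hv : ∀ w, S w = 0 → ⟪v, w⟫ = 0) :
    lam * ‖v‖ ^ 2 ≤ ⟪S v, v⟫ := by
  have hSym : (S : EuclideanSpace ℝ (Fin k) →ₗ[ℝ] EuclideanSpace ℝ (Fin k)).IsSymmetric := by
    intro x y; exact hS x y
  have hrank : Module.finrank ℝ (EuclideanSpace ℝ (Fin k)) = k := finrank_euclideanSpace_fin
  set B := hSym.eigenvectorBasis hrank with hB
  set ev := hSym.eigenvalues hrank with hev
  have happ : ∀ i, S (B i) = ev i • B i := fun i => hSym.apply_eigenvectorBasis hrank i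
  have hsum1 : ∑ i, ⟪S v, B i⟫ * ⟪B i, v⟫ = ⟪S v, v⟫ := B.sum_inner_mul_inner (S v) v
  have hsum2 : ∑ i, ⟪v, B i⟫ * ⟪B i, v⟫ = ⟪v, v⟫ := B.sum_inner_mul_inner v v
  have hterm : ∀ i, ⟪S v, B i⟫ = ev i * ⟪v, B i⟫ := by
    intro i
    rw [hS v (B i), happ i, real_inner_smul_right]
  have hnormsq : ‖v‖ ^ 2 = ∑ i, ⟪v, B i⟫ * ⟪B i, v⟫ := by
    rw [hsum2, real_inner_self_eq_norm_sq]
  rw [← hsum1, hnormsq, Finset.mul_sum]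
  apply Finset.sum_le_sum
  intro i _
  rw [hterm i, real_inner_comm (B i) v]
  by_cases hzero : ev i = 0
  · have hSBi : S (B i) = 0 := by rw [happ i, hzero, zero_smul]
    have h0 : (inner ℝ (B i) v : ℝ) = 0 := by
      rw [real_inner_comm]; exact hv (B i) hSBi
    rw [h0]
    simp
  · have hBne : B i ≠ 0 := by
      intro hcon
      have := B.orthonormal.1 i
      rw [hcon] at this
      simp at this
    have hle := heig (ev i) (B i) hBne hzero (happ i)
    nlinarith [mul_self_nonneg (inner ℝ (B i) v : ℝ), hle]

section helpers2

lemma sq_rpow_half (r s : ℝ) (hr : 0 ≤ r) : (r ^ 2) ^ (s / 2) = r ^ s := by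
  rw [← Real.rpow_natCast r 2, ← Real.rpow_mul hr]
  congr 1
  push_cast
  ring

variable {E F : Type*} [NormedAddCommGroup E] [InnerProductSpace ℝ E]
  [NormedAddCommGroup F] [InnerProductSpace ℝ F] [CompleteSpace E] [CompleteSpace F]

lemma comp_adjoint_sym (B : E →L[ℝ] F) (u v : F) :
    ⟪(B ∘L ContinuousLinearMap.adjoint B) u, v⟫ = ⟪u, (B ∘L ContinuousLinearMap.adjoint B) v⟫ := by
  simp only [ContinuousLinearMap.comp_apply]
  rw [← ContinuousLinearMap.adjoint_inner_right B (ContinuousLinearMap.adjoint B u) v,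
      ContinuousLinearMap.adjoint_inner_left]

lemma comp_adjoint_ker (B : E →L[ℝ] F) (w : F)
    (hw : (B ∘L ContinuousLinearMap.adjoint B) w = 0) :
    ContinuousLinearMap.adjoint B w = 0 := by
  have h0 : (inner ℝ (ContinuousLinearMap.adjoint B w) (ContinuousLinearMap.adjoint B w) : ℝ) = 0 := by
    rw [ContinuousLinearMap.adjoint_inner_left]
    have h : B ((ContinuousLinearMap.adjoint B) w) = 0 := hw
    rw [h, inner_zero_right]
  exact inner_self_eq_zero.mp h0

end helpers2

open scoped RealInnerProductSpace

set_option maxHeartbeats 4000000 in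
/-- Theorem 4: the projected FxT gradient flow with free initialization reaches
the feasible set and the constrained minimum after a fixed time independent of
the initial condition. -/
theorem projected_fxtgf_free_initialization
    {n m : ℕ}
    (A : EuclideanSpace ℝ (Fin n) →L[ℝ] EuclideanSpace ℝ (Fin m))
    (b : EuclideanSpace ℝ (Fin m)) (hfeas : ∃ z, A z = b)
    (f : EuclideanSpace ℝ (Fin n) → ℝ) (μ : ℝ) (hμ : 0 < μ)
    (hf : ContDiff ℝ 1 f)
    (hsc : ∀ z w, f z + ⟪gradient f z, w - z⟫ + μ / 2 * ‖w - z‖ ^ 2 ≤ f w)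
    (fstar : ℝ) (hatt : ∃ z, A z = b ∧ f z = fstar)
    (hlb : ∀ z, A z = b → fstar ≤ f z)
    (P : EuclideanSpace ℝ (Fin n) →L[ℝ] EuclideanSpace ℝ (Fin n))
    (hP : LinearMap.range (P : EuclideanSpace ℝ (Fin n) →ₗ[ℝ] EuclideanSpace ℝ (Fin n)) = LinearMap.ker (A : EuclideanSpace ℝ (Fin n) →ₗ[ℝ] EuclideanSpace ℝ (Fin m)))
    (σ ρ p q : ℝ) (hσ : 0 < σ) (hρ : 0 < ρ) (hp : p ∈ Set.Ico (0:ℝ) 1) (hq : 1 < q)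
    (g : EuclideanSpace ℝ (Fin n) → EuclideanSpace ℝ (Fin n))
    (hg : ∀ y, σ * ‖y‖ ^ (1 + p) + ρ * ‖y‖ ^ (1 + q) ≤ ⟪g y, y⟫)
    (σh ρh ph qh : ℝ) (hσh : 0 < σh) (hρh : 0 < ρh)
    (hph : ph ∈ Set.Ico (0:ℝ) 1) (hqh : 1 < qh)
    (gh : EuclideanSpace ℝ (Fin m) → EuclideanSpace ℝ (Fin m))
    (hspan : ∀ y, ∃ c : ℝ, gh y = c • y)
    (hgh : ∀ y, σh * ‖y‖ ^ (1 + ph) + ρh * ‖y‖ ^ (1 + qh) ≤ ⟪gh y, y⟫)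
    (lamP : ℝ) (hlamP : 0 < lamP)
    (heigP : ∀ (c : ℝ) (v : EuclideanSpace ℝ (Fin n)), v ≠ 0 → c ≠ 0 →
      (ContinuousLinearMap.adjoint P ∘L P) v = c • v → lamP ≤ c)
    (lamA : ℝ) (hlamA : 0 < lamA)
    (heigA : ∀ (c : ℝ) (v : EuclideanSpace ℝ (Fin m)), v ≠ 0 → c ≠ 0 →
      (A ∘L ContinuousLinearMap.adjoint A) v = c • v → lamA ≤ c) :
    ∃ T : ℝ, 0 ≤ T ∧
      ∀ x : ℝ → EuclideanSpace ℝ (Fin n),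
        (∀ t ≥ (0:ℝ), HasDerivAt x
          (-(P (g (ContinuousLinearMap.adjoint P (gradient f (x t)))))
            - ContinuousLinearMap.adjoint A (gh (A (x t) - b))) t) →
        ∀ t ≥ T, A (x t) = b ∧ f (x t) = fstar := by
  obtain ⟨p0, p1⟩ := hp
  obtain ⟨ph0, ph1⟩ := hph
  obtain ⟨z₀, hz₀⟩ := hfeas
  obtain ⟨zs, hzsA, hzsf⟩ := hatt
  have hμlamP : (0:ℝ) < 2 * μ * lamP := by positivity
  obtain ⟨α₁, hα₁⟩ : ∃ X : ℝ, X = (1 + ph) / 2 := ⟨_, rfl⟩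
  obtain ⟨β₁, hβ₁⟩ : ∃ X : ℝ, X = (1 + qh) / 2 := ⟨_, rfl⟩
  obtain ⟨a₁, ha₁⟩ : ∃ X : ℝ, X = 2 * lamA * σh := ⟨_, rfl⟩
  obtain ⟨b₁, hb₁⟩ : ∃ X : ℝ, X = 2 * lamA * ρh := ⟨_, rfl⟩
  obtain ⟨α₂, hα₂⟩ : ∃ X : ℝ, X = (1 + p) / 2 := ⟨_, rfl⟩
  obtain ⟨β₂, hβ₂⟩ : ∃ X : ℝ, X = (1 + q) / 2 := ⟨_, rfl⟩
  obtain ⟨a₂, ha₂⟩ : ∃ X : ℝ, X = σ * (2 * μ * lamP) ^ α₂ := ⟨_, rfl⟩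
  obtain ⟨b₂, hb₂⟩ : ∃ X : ℝ, X = ρ * (2 * μ * lamP) ^ β₂ := ⟨_, rfl⟩
  have ha₁p : 0 < a₁ := by rw [ha₁]; positivity
  have hb₁p : 0 < b₁ := by rw [hb₁]; positivity
  have ha₂p : 0 < a₂ := by rw [ha₂]; exact mul_pos hσ (Real.rpow_pos_of_pos hμlamP _)
  have hb₂p : 0 < b₂ := by rw [hb₂]; exact mul_pos hρ (Real.rpow_pos_of_pos hμlamP _)
  have hα₁0 : 0 < α₁ := by rw [hα₁]; linarith
  have hα₁1 : α₁ < 1 := by rw [hα₁]; linarith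
  have hβ₁1 : 1 < β₁ := by rw [hβ₁]; linarith
  have hα₂0 : 0 < α₂ := by rw [hα₂]; linarith
  have hα₂1 : α₂ < 1 := by rw [hα₂]; linarith
  have hβ₂1 : 1 < β₂ := by rw [hβ₂]; linarith
  obtain ⟨T₁, hT₁⟩ : ∃ X : ℝ, X = 1 / (b₁ * (β₁ - 1)) + 1 / (a₁ * (1 - α₁)) := ⟨_, rfl⟩
  obtain ⟨T₂, hT₂⟩ : ∃ X : ℝ, X = 1 / (b₂ * (β₂ - 1)) + 1 / (a₂ * (1 - α₂)) := ⟨_, rfl⟩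
  have hT₁p : 0 < T₁ := by
    rw [hT₁]
    have h1 : 0 < 1 / (b₁ * (β₁ - 1)) := one_div_pos.mpr (by nlinarith)
    have h2 : 0 < 1 / (a₁ * (1 - α₁)) := one_div_pos.mpr (by nlinarith)
    linarith
  have hT₂p : 0 < T₂ := by
    rw [hT₂]
    have h1 : 0 < 1 / (b₂ * (β₂ - 1)) := one_div_pos.mpr (by nlinarith)
    have h2 : 0 < 1 / (a₂ * (1 - α₂)) := one_div_pos.mpr (by nlinarith)
    linarith
  refine ⟨T₁ + T₂, by linarith, ?_⟩
  intro x hx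
  obtain ⟨e, he⟩ : ∃ X : ℝ → EuclideanSpace ℝ (Fin m), X = fun t => A (x t) - b := ⟨_, rfl⟩
  obtain ⟨xd, hxd⟩ : ∃ X : ℝ → EuclideanSpace ℝ (Fin n), X = fun t =>
      -(P (g (ContinuousLinearMap.adjoint P (gradient f (x t)))))
        - ContinuousLinearMap.adjoint A (gh (e t)) := ⟨_, rfl⟩
  have hx' : ∀ t ≥ (0:ℝ), HasDerivAt x (xd t) t := by
    intro t ht
    rw [hxd]
    simp only [he]
    exact hx t ht
  have hAP : ∀ z, A (P z) = 0 := by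
    intro z
    have h1 : P z ∈ LinearMap.range (P : EuclideanSpace ℝ (Fin n) →ₗ[ℝ] EuclideanSpace ℝ (Fin n)) := LinearMap.mem_range_self (P : EuclideanSpace ℝ (Fin n) →ₗ[ℝ] EuclideanSpace ℝ (Fin n)) z
    rw [hP] at h1
    exact h1
  have he' : ∀ t ≥ (0:ℝ), HasDerivAt e (A (xd t)) t := by
    intro t ht
    rw [he]
    exact (A.hasFDerivAt.comp_hasDerivAt t (hx' t ht)).sub_const b
  obtain ⟨V, hV⟩ : ∃ X : ℝ → ℝ, X = fun t => ‖e t‖ ^ 2 := ⟨_, rfl⟩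
  obtain ⟨Vd, hVd⟩ : ∃ X : ℝ → ℝ, X = fun t => 2 * ⟪A (xd t), e t⟫ := ⟨_, rfl⟩
  have hVderiv : ∀ t ≥ (0:ℝ), HasDerivAt V (Vd t) t := by
    intro t ht
    have h := HasDerivAt.inner ℝ (he' t ht) (he' t ht)
    have heq : (fun s => (inner ℝ (e s) (e s) : ℝ)) = V := by
      funext s
      rw [hV]
      exact real_inner_self_eq_norm_sq (e s)
    rw [heq] at h
    refine h.congr_deriv ?_
    rw [hVd]
    simp only []
    rw [real_inner_comm (e t) (A (xd t))]
    ring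
  have hVpos : ∀ t ≥ (0:ℝ), 0 ≤ V t := by
    intro t _
    rw [hV]
    positivity
  -- the symmetric operator A A^T and its kernel facts
  have he_mem : ∀ t, ∀ w, (A ∘L ContinuousLinearMap.adjoint A) w = 0 → ⟪e t, w⟫ = 0 := by
    intro t w hw
    have h2 : ContinuousLinearMap.adjoint A w = 0 := comp_adjoint_ker A w hw
    have h3 : e t = A (x t - z₀) := by rw [he]; simp only [map_sub, hz₀]
    rw [h3, real_inner_comm, ← ContinuousLinearMap.adjoint_inner_left, h2, inner_zero_left]
  have hVle : ∀ t ≥ (0:ℝ), Vd t ≤ -a₁ * (V t) ^ α₁ - b₁ * (V t) ^ β₁ := by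
    intro t ht
    obtain ⟨c, hc⟩ := hspan (e t)
    have hAxd : A (xd t) = -(c • ((A ∘L ContinuousLinearMap.adjoint A) (e t))) := by
      rw [hxd]
      simp only []
      rw [map_sub, map_neg, hAP, hc, map_smul, map_smul]
      simp [ContinuousLinearMap.comp_apply]
    have hkey : lamA * (σh * ‖e t‖ ^ (1 + ph) + ρh * ‖e t‖ ^ (1 + qh))
        ≤ c * ⟪(A ∘L ContinuousLinearMap.adjoint A) (e t), e t⟫ := by
      by_cases het : e t = 0
      · rw [het]
        simp only [map_zero, inner_zero_left, mul_zero, norm_zero]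
        rw [Real.zero_rpow (by positivity), Real.zero_rpow (by positivity)]
        simp
      · have hgh' := hgh (e t)
        rw [hc, real_inner_smul_left, real_inner_self_eq_norm_sq] at hgh'
        have hnp : 0 < ‖e t‖ := norm_pos_iff.mpr het
        have hr1 : 0 < ‖e t‖ ^ (1 + ph) := Real.rpow_pos_of_pos hnp _
        have hr2 : 0 < ‖e t‖ ^ (1 + qh) := Real.rpow_pos_of_pos hnp _
        have hcpos : 0 < c := by nlinarith [sq_nonneg ‖e t‖]
        have hspec := spec_lb (A ∘L ContinuousLinearMap.adjoint A) (comp_adjoint_sym A)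
          lamA heigA (e t) (he_mem t)
        have f1 := mul_le_mul_of_nonneg_left hspec hcpos.le
        have f2 := mul_le_mul_of_nonneg_left hgh' hlamA.le
        nlinarith [f1, f2]
    have hV1 : (V t) ^ α₁ = ‖e t‖ ^ (1 + ph) := by
      rw [hV, hα₁]
      simp only []
      exact sq_rpow_half _ _ (norm_nonneg _)
    have hV2 : (V t) ^ β₁ = ‖e t‖ ^ (1 + qh) := by
      rw [hV, hβ₁]
      simp only []
      exact sq_rpow_half _ _ (norm_nonneg _)
    have hVdval : Vd t = -(2 * (c * ⟪(A ∘L ContinuousLinearMap.adjoint A) (e t), e t⟫)) := by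
      rw [hVd]
      simp only []
      rw [hAxd, inner_neg_left, real_inner_smul_left]
      ring
    rw [hVdval, hV1, hV2, ha₁, hb₁]
    nlinarith [hkey]
  -- Phase 1 conclusion: feasibility after time T₁
  have hfeasT : ∀ t ≥ T₁, A (x t) = b := by
    have hzero := fxt_lemma a₁ b₁ α₁ β₁ ha₁p hb₁p hα₁0 hα₁1 hβ₁1 0 V Vd hVderiv hVpos hVle
    intro t ht
    have hVt : V t = 0 := by
      apply hzero t
      rw [zero_add, ← hT₁]
      exact ht
    have : ‖e t‖ = 0 := by
      rw [hV] at hVt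
      simp only [] at hVt
      nlinarith [norm_nonneg (e t)]
    have he0 : e t = 0 := norm_eq_zero.mp this
    rw [he] at he0
    simp only [] at he0
    exact sub_eq_zero.mp he0
  -- Phase 2
  obtain ⟨W, hW⟩ : ∃ X : ℝ → ℝ, X = fun t => f (x t) - fstar := ⟨_, rfl⟩
  obtain ⟨Wd, hWd⟩ : ∃ X : ℝ → ℝ, X = fun t => ⟪gradient f (x t), xd t⟫ := ⟨_, rfl⟩
  have hWderiv : ∀ t ≥ T₁, HasDerivAt W (Wd t) t := by
    intro t ht
    have ht0 : (0:ℝ) ≤ t := le_trans hT₁p.le ht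
    have hdiff : DifferentiableAt ℝ f (x t) := (hf.differentiable one_ne_zero).differentiableAt
    have h := hdiff.hasGradientAt.hasFDerivAt.comp_hasDerivAt t (hx' t ht0)
    rw [InnerProductSpace.toDual_apply_apply] at h
    rw [hW, hWd]
    exact h.sub_const fstar
  have hWpos : ∀ t ≥ T₁, 0 ≤ W t := by
    intro t ht
    rw [hW]
    simp only []
    linarith [hlb (x t) (hfeasT t ht)]
  have hWle : ∀ t ≥ T₁, Wd t ≤ -a₂ * (W t) ^ α₂ - b₂ * (W t) ^ β₂ := by
    intro t ht
    have hfeast := hfeasT t ht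
    have het : e t = 0 := by rw [he]; simp only [hfeast, sub_self]
    have hgh0 : gh (e t) = 0 := by
      obtain ⟨c, hc⟩ := hspan (0 : EuclideanSpace ℝ (Fin m))
      rw [het, hc, smul_zero]
    obtain ⟨v, hv⟩ : ∃ X : EuclideanSpace ℝ (Fin n), X = gradient f (x t) := ⟨_, rfl⟩
    obtain ⟨y, hy⟩ : ∃ X : EuclideanSpace ℝ (Fin n), X = ContinuousLinearMap.adjoint P v := ⟨_, rfl⟩
    have hxdt : xd t = -(P (g y)) := by
      rw [hxd]
      simp only []
      rw [hgh0, map_zero, sub_zero, hy, hv]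
    have hWdval : Wd t = -⟪g y, y⟫ := by
      rw [hWd]
      simp only []
      rw [hxdt, inner_neg_right, ← hv]
      congr 1
      rw [← ContinuousLinearMap.adjoint_inner_left P (g y) v, ← hy, real_inner_comm]
    -- the PL-type inequality
    obtain ⟨K, hK⟩ : ∃ X : Submodule ℝ (EuclideanSpace ℝ (Fin n)), X = LinearMap.ker (A : EuclideanSpace ℝ (Fin n) →ₗ[ℝ] EuclideanSpace ℝ (Fin m)) := ⟨_, rfl⟩
    obtain ⟨u, hu⟩ : ∃ X : EuclideanSpace ℝ (Fin n), X = (K.orthogonalProjectionOnto v : EuclideanSpace ℝ (Fin n)) := ⟨_, rfl⟩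
    have humem : u ∈ K := by rw [hu]; exact (K.orthogonalProjectionOnto v).2
    have hperp : v - u ∈ Kᗮ := by rw [hu]; exact Submodule.sub_starProjection_mem_orthogonal (K := K) v
    have hd : zs - x t ∈ K := by
      rw [hK, LinearMap.mem_ker, ContinuousLinearMap.coe_coe, map_sub, hzsA, hfeast, sub_self]
    have hinner : ⟪v, zs - x t⟫ = ⟪u, zs - x t⟫ := by
      have h0 : ⟪zs - x t, v - u⟫ = 0 :=
        (Submodule.mem_orthogonal K (v - u)).mp hperp (zs - x t) hd
      have h1 : ⟪v - u, zs - x t⟫ = 0 := by rw [real_inner_comm]; exact h0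
      rw [inner_sub_left] at h1
      linarith
    have habs : -(‖u‖ * ‖zs - x t‖) ≤ ⟪u, zs - x t⟫ :=
      neg_le_of_abs_le (abs_real_inner_le_norm u (zs - x t))
    have hsc' := hsc (x t) zs
    rw [← hv, hzsf] at hsc'
    have hWa : 2 * μ * W t ≤ ‖u‖ ^ 2 := by
      rw [hW]
      simp only []
      nlinarith [hsc', hinner, habs, sq_nonneg (μ * ‖zs - x t‖ - ‖u‖), hμ]
    -- spectral bound for P
    have heigP' : ∀ (c : ℝ) (w : EuclideanSpace ℝ (Fin n)), w ≠ 0 → c ≠ 0 →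
        (P ∘L ContinuousLinearMap.adjoint P) w = c • w → lamP ≤ c := by
      intro c w hw hc0 hsw
      have h1 : (ContinuousLinearMap.adjoint P ∘L P) (ContinuousLinearMap.adjoint P w)
          = c • ContinuousLinearMap.adjoint P w := by
        have h2 := congrArg (ContinuousLinearMap.adjoint P) hsw
        simpa [ContinuousLinearMap.comp_apply, map_smul] using h2
      have h2 : ContinuousLinearMap.adjoint P w ≠ 0 := by
        intro hz
        apply hw
        have h3 : (P ∘L ContinuousLinearMap.adjoint P) w = 0 := by
          simp [ContinuousLinearMap.comp_apply, hz]
        rw [h3] at hsw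
        exact ((smul_eq_zero.mp hsw.symm).resolve_left hc0)
      exact heigP c _ h2 hc0 h1
    have humem' : ∀ w, (P ∘L ContinuousLinearMap.adjoint P) w = 0 → ⟪u, w⟫ = 0 := by
      intro w hw
      have h2 : ContinuousLinearMap.adjoint P w = 0 := comp_adjoint_ker P w hw
      obtain ⟨zz, hzz⟩ : u ∈ LinearMap.range (P : EuclideanSpace ℝ (Fin n) →ₗ[ℝ] EuclideanSpace ℝ (Fin n)) := by rw [hP, ← hK]; exact humem
      have hzz : P zz = u := hzz
      rw [← hzz, real_inner_comm, ← ContinuousLinearMap.adjoint_inner_left, h2, inner_zero_left]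
    have hspecP := spec_lb (P ∘L ContinuousLinearMap.adjoint P) (comp_adjoint_sym P)
      lamP heigP' u humem'
    have hperp0 : ContinuousLinearMap.adjoint P (v - u) = 0 := by
      have hmemK : P (ContinuousLinearMap.adjoint P (v - u)) ∈ K := by
        rw [hK, ← hP]
        exact LinearMap.mem_range_self _ _
      have h0 : (inner ℝ (ContinuousLinearMap.adjoint P (v - u))
          (ContinuousLinearMap.adjoint P (v - u)) : ℝ) = 0 := by
        rw [ContinuousLinearMap.adjoint_inner_left, real_inner_comm]
        exact (Submodule.mem_orthogonal K (v - u)).mp hperp _ hmemK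
      exact inner_self_eq_zero.mp h0
    have hyu : y = ContinuousLinearMap.adjoint P u := by
      have h4 : v = (v - u) + u := by abel
      rw [hy, h4, map_add, hperp0, zero_add]
    have hyy : ‖y‖ ^ 2 = ⟪(P ∘L ContinuousLinearMap.adjoint P) u, u⟫ := by
      rw [hyu, ← real_inner_self_eq_norm_sq]
      have h5 : (inner ℝ (ContinuousLinearMap.adjoint P u) (ContinuousLinearMap.adjoint P u) : ℝ)
          = ⟪u, P (ContinuousLinearMap.adjoint P u)⟫ :=
        ContinuousLinearMap.adjoint_inner_left P (ContinuousLinearMap.adjoint P u) u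
      rw [h5, real_inner_comm, ContinuousLinearMap.comp_apply]
    have hkey2 : 2 * μ * lamP * W t ≤ ‖y‖ ^ 2 := by
      have f1 := mul_le_mul_of_nonneg_left hWa hlamP.le
      linarith [f1, hspecP, hyy]
    -- convert to rpow bound
    have hWnn : 0 ≤ W t := hWpos t ht
    have hprod : 0 ≤ 2 * μ * lamP * W t := by positivity
    have hpow1 : (2 * μ * lamP) ^ α₂ * (W t) ^ α₂ ≤ ‖y‖ ^ (1 + p) := by
      have h1 : (2 * μ * lamP * W t) ^ α₂ ≤ (‖y‖ ^ 2) ^ α₂ :=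
        Real.rpow_le_rpow hprod hkey2 (le_of_lt hα₂0)
      rw [← Real.mul_rpow hμlamP.le hWnn]
      rw [hα₂] at h1 ⊢
      rwa [sq_rpow_half _ _ (norm_nonneg _)] at h1
    have hpow2 : (2 * μ * lamP) ^ β₂ * (W t) ^ β₂ ≤ ‖y‖ ^ (1 + q) := by
      have h1 : (2 * μ * lamP * W t) ^ β₂ ≤ (‖y‖ ^ 2) ^ β₂ :=
        Real.rpow_le_rpow hprod hkey2 (by rw [hβ₂]; linarith)
      rw [← Real.mul_rpow hμlamP.le hWnn]
      rw [hβ₂] at h1 ⊢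
      rwa [sq_rpow_half _ _ (norm_nonneg _)] at h1
    have hgy := hg y
    rw [hWdval, ha₂, hb₂]
    have m1 := mul_le_mul_of_nonneg_left hpow1 hσ.le
    have m2 := mul_le_mul_of_nonneg_left hpow2 hρ.le
    linarith [m1, m2, hgy]
  -- apply fixed-time lemma for phase 2
  have hzero2 := fxt_lemma a₂ b₂ α₂ β₂ ha₂p hb₂p hα₂0 hα₂1 hβ₂1 T₁ W Wd hWderiv hWpos hWle
  intro t ht
  have ht1 : t ≥ T₁ := by linarith
  refine ⟨hfeasT t ht1, ?_⟩
  have hWt : W t = 0 := by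
    apply hzero2 t
    rw [← hT₂]
    exact ht
  rw [hW] at hWt
  simp only [] at hWt
  linarith
end

section
/- Let L_f > 0, λ ∈ (0, 1/L_f), μ > 0, κ_p, κ_q > 0, p ∈ [0,1), q > 1. Let f : ℝ^n → ℝ be twice continuously differentiable with ⟨∇²f(z)h, h⟩ ≤ L_f‖h‖₂² for all z, h ∈ ℝ^n. Let F : ℝ^n → ℝ be continuously differentiable and attain its minimum value F*, and let H : ℝ^n → ℝ^n be a map such that, for all z ∈ ℝ^n: ∇F(z) = H(z) − λ·∇²f(z)(H(z)) and (1/2)‖H(z)‖₂² ≥ μ(F(z) − F*). If x : [0,∞) → ℝ^n is differentiable and x′(t) = −κ_p·H(x(t))/‖H(x(t))‖₂^{1−p} − κ_q·‖H(x(t))‖₂^{q−1}·H(x(t)) for all t ≥ 0 (the right-hand side interpreted as 0 when H(x(t)) = 0), then F(x(t)) = F* for all t ≥ T, where T = (1/(μ(1−λL_f)))·(1/(κ_p(1−p)) + 1/(κ_q(q−1))). (Theorem 5, where F is the forward–backward envelope F_λ of the composite problem min f + h, H = H_λ(z) = (z − prox_{λh}(z − λ∇f(z)))/λ is the prox-gradient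 mapping satisfying ∇F_λ = (I − λ∇²f)H_λ, and the second displayed hypothesis is the proximal PL inequality.) -/
open scoped RealInnerProductSpace
open Set

/-!
Along the flow, `V = 2μ (F ∘ x - F*)` satisfies `V' = 2μ ⟪(I - λ∇²f) H, ẋ⟫`; the curvature bound
gives `⟪(I - λ∇²f) H, H⟫ ≥ (1 - λ L_f) ‖H‖²` and the proximal PL inequality gives `V ≤ ‖H‖²`, so
`V' ≤ -c_p V^α - c_q V^β` with `α = (1 + p)/2 < 1 < β = (1 + q)/2` and `c = 2μ(1 - λL_f)κ`.
Integrating `d/dt V^(1-γ)/(1-γ) ≤ -c` twice, the `β`-term brings `V` below `1` by time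
`1/(c_q(β - 1))` whatever `V(0)` is, and the `α`-term then brings it to `0` within `1/(c_p(1 - α))`.
-/

section ScalarComparison

variable {W W' : ℝ → ℝ} {c γ s u : ℝ}

/-- `t ↦ W t ^ (1 - γ) / (1 - γ)` has derivative `W' t * W t ^ (-γ) ≤ -c`. -/
theorem rpow_one_sub_div_sub_le_of_hasDerivAt_le (hγ : γ ≠ 1) (hsu : s ≤ u)
    (hW : ∀ t ∈ Icc s u, HasDerivAt W (W' t) t) (hpos : ∀ t ∈ Icc s u, 0 < W t)
    (hW' : ∀ t ∈ Icc s u, W' t ≤ -c * W t ^ γ) :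
    W u ^ (1 - γ) / (1 - γ) - W s ^ (1 - γ) / (1 - γ) ≤ -c * (u - s) := by
  have hγ' : 1 - γ ≠ 0 := sub_ne_zero.2 hγ.symm
  have hderiv : ∀ t ∈ Icc s u,
      HasDerivAt (fun t ↦ W t ^ (1 - γ) / (1 - γ)) (W' t * W t ^ (-γ)) t := by
    intro t ht
    refine (((hW t ht).rpow_const (Or.inl (hpos t ht).ne')).div_const (1 - γ)).congr_deriv ?_
    rw [sub_sub_cancel_left]
    field_simp
  refine (convex_Icc s u).image_sub_le_mul_sub_of_deriv_le
    (fun t ht ↦ (hderiv t ht).continuousAt.continuousWithinAt)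
    (fun t ht ↦ (hderiv t (interior_subset ht)).differentiableAt.differentiableWithinAt)
    (fun t ht ↦ ?_) s (left_mem_Icc.2 hsu) u (right_mem_Icc.2 hsu) hsu
  have ht := interior_subset ht
  have hWt := hpos t ht
  rw [(hderiv t ht).deriv]
  calc W' t * W t ^ (-γ) ≤ -c * W t ^ γ * W t ^ (-γ) :=
        mul_le_mul_of_nonneg_right (hW' t ht) (Real.rpow_nonneg hWt.le _)
    _ = -c := by rw [mul_assoc, ← Real.rpow_add hWt, add_neg_cancel, Real.rpow_zero, mul_one]

theorem le_one_of_hasDerivAt_le_neg_rpow (hγ : 1 < γ) (hsu : s ≤ u)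
    (hW : ∀ t ∈ Icc s u, HasDerivAt W (W' t) t) (hanti : AntitoneOn W (Icc s u))
    (hW' : ∀ t ∈ Icc s u, W' t ≤ -c * W t ^ γ) (hT : 1 ≤ c * (γ - 1) * (u - s)) :
    W u ≤ 1 := by
  by_contra! hu
  have hpos : ∀ t ∈ Icc s u, 0 < W t := fun t ht ↦
    one_pos.trans (hu.trans_le (hanti ht (right_mem_Icc.2 hsu) ht.2))
  have hcmp := rpow_one_sub_div_sub_le_of_hasDerivAt_le hγ.ne' hsu hW hpos hW'
  have hneg : 1 - γ < 0 := by linarith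
  rw [div_sub_div_same, div_le_iff_of_neg hneg] at hcmp
  have hu' : W u ^ (1 - γ) < 1 := Real.rpow_lt_one_of_one_lt_of_neg hu hneg
  have hs' : 0 ≤ W s ^ (1 - γ) := Real.rpow_nonneg (hpos s (left_mem_Icc.2 hsu)).le _
  nlinarith

theorem nonpos_of_hasDerivAt_le_neg_rpow (hγ : γ < 1) (hsu : s ≤ u)
    (hW : ∀ t ∈ Icc s u, HasDerivAt W (W' t) t) (hanti : AntitoneOn W (Icc s u))
    (hW' : ∀ t ∈ Icc s u, W' t ≤ -c * W t ^ γ) (hs : W s ≤ 1)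
    (hT : 1 ≤ c * (1 - γ) * (u - s)) :
    W u ≤ 0 := by
  by_contra! hu
  have hpos : ∀ t ∈ Icc s u, 0 < W t := fun t ht ↦
    hu.trans_le (hanti ht (right_mem_Icc.2 hsu) ht.2)
  have hcmp := rpow_one_sub_div_sub_le_of_hasDerivAt_le hγ.ne hsu hW hpos hW'
  have hγ' : 0 < 1 - γ := by linarith
  rw [div_sub_div_same, div_le_iff₀ hγ'] at hcmp
  have hu' : 0 < W u ^ (1 - γ) := Real.rpow_pos_of_pos hu _
  have hs' : W s ^ (1 - γ) ≤ 1 :=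
    Real.rpow_le_one (hpos s (left_mem_Icc.2 hsu)).le hs hγ'.le
  nlinarith

end ScalarComparison

theorem eq_zero_of_hasDerivAt_le_neg_mul_rpow_sub_mul_rpow_s15 {W W' : ℝ → ℝ} {cp cq α β : ℝ}
    (hcp : 0 < cp) (hcq : 0 < cq) (hα : α < 1) (hβ : 1 < β)
    (hW : ∀ t ≥ (0 : ℝ), HasDerivAt W (W' t) t) (hW0 : ∀ t ≥ (0 : ℝ), 0 ≤ W t)
    (hW' : ∀ t ≥ (0 : ℝ), W' t ≤ -cp * W t ^ α - cq * W t ^ β) :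
    ∀ t, 1 / (cp * (1 - α)) + 1 / (cq * (β - 1)) ≤ t → W t = 0 := by
  set Tp := 1 / (cp * (1 - α))
  set Tq := 1 / (cq * (β - 1))
  have hcpα : 0 < cp * (1 - α) := mul_pos hcp (by linarith)
  have hcqβ : 0 < cq * (β - 1) := mul_pos hcq (by linarith)
  have hTp : 0 < Tp := by positivity
  have hTq : 0 < Tq := by positivity
  have hanti : AntitoneOn W (Ici 0) := by
    refine antitoneOn_of_hasDerivWithinAt_nonpos (convex_Ici 0)
      (fun t ht ↦ (hW t ht).continuousAt.continuousWithinAt)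
      (fun t ht ↦ (hW t (interior_subset ht)).hasDerivWithinAt) (fun t ht ↦ ?_)
    have ht : 0 ≤ t := interior_subset ht
    have := hW' t ht
    have := Real.rpow_nonneg (hW0 t ht) α
    have := Real.rpow_nonneg (hW0 t ht) β
    nlinarith
  have hIcc {a b : ℝ} (ha : 0 ≤ a) : Icc a b ⊆ Ici 0 := fun t ht ↦ ha.trans ht.1
  have hWq : W Tq ≤ 1 := by
    refine le_one_of_hasDerivAt_le_neg_rpow (s := 0) (c := cq) hβ hTq.le
      (fun t ht ↦ hW t ht.1) (hanti.mono (hIcc le_rfl)) (fun t ht ↦ ?_) ?_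
    · nlinarith [hW' t ht.1, Real.rpow_nonneg (hW0 t ht.1) α]
    · rw [sub_zero, mul_one_div_cancel hcqβ.ne']
  have hWpq : W (Tq + Tp) ≤ 0 := by
    refine nonpos_of_hasDerivAt_le_neg_rpow (c := cp) hα (by linarith)
      (fun t ht ↦ hW t (hTq.le.trans ht.1)) (hanti.mono (hIcc hTq.le)) (fun t ht ↦ ?_) hWq ?_
    · nlinarith [hW' t (hTq.le.trans ht.1), Real.rpow_nonneg (hW0 t (hTq.le.trans ht.1)) β]
    · rw [add_sub_cancel_left, mul_one_div_cancel hcpα.ne']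
  intro t ht
  have hTt : Tq + Tp ≤ t := by linarith
  have ht0 : (0 : ℝ) ≤ t := by linarith
  exact le_antisymm ((hanti (mem_Ici.2 (by linarith)) ht0 hTt).trans hWpq) (hW0 t ht0)

theorem rpow_half_le_rpow_of_le_sq {v r e : ℝ} (hv : 0 ≤ v) (hr : 0 ≤ r) (he : 0 ≤ e)
    (hvr : v ≤ r ^ 2) : v ^ (e / 2) ≤ r ^ e := by
  calc v ^ (e / 2) ≤ (r ^ 2) ^ (e / 2) := Real.rpow_le_rpow hv hvr (by positivity)
    _ = r ^ e := by
      rw [← Real.rpow_natCast_mul hr, Nat.cast_ofNat, mul_div_cancel₀ e two_ne_zero]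

section FixedTimeField

variable {E : Type*} [NormedAddCommGroup E] [InnerProductSpace ℝ E]

/-- At `h = 0` the junk value `κp / 0 = 0` makes this `0`, the paper's convention. -/
noncomputable def fxtField (κp κq p q : ℝ) (h : E) : E :=
  -((κp / ‖h‖ ^ (1 - p)) • h) - (κq * ‖h‖ ^ (q - 1)) • h

theorem fxtField_eq_neg_smul (κp κq p q : ℝ) (h : E) :
    fxtField κp κq p q h = -((κp / ‖h‖ ^ (1 - p) + κq * ‖h‖ ^ (q - 1)) • h) := by
  rw [fxtField, add_smul, neg_add, sub_eq_add_neg]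

theorem fxt_gain_mul_sq {r : ℝ} (κp κq : ℝ) {p q : ℝ} (hr : 0 ≤ r) (hp : -1 < p) (hq : -1 < q) :
    (κp / r ^ (1 - p) + κq * r ^ (q - 1)) * r ^ 2 = κp * r ^ (1 + p) + κq * r ^ (1 + q) := by
  rcases hr.eq_or_lt with rfl | hr
  · rw [Real.zero_rpow (by linarith : (0 : ℝ) < 1 + p).ne',
      Real.zero_rpow (by linarith : (0 : ℝ) < 1 + q).ne']
    simp
  · have hsq : r ^ 2 = r ^ (2 : ℝ) := (Real.rpow_two r).symm
    rw [hsq, add_mul, div_mul_eq_mul_div, mul_div_assoc, ← Real.rpow_sub hr, mul_assoc,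
      ← Real.rpow_add hr]
    ring_nf

theorem inner_sub_smul_fxtField_le {h w : E} {lam L κp κq p q : ℝ} (hlam : 0 ≤ lam)
    (hκp : 0 ≤ κp) (hκq : 0 ≤ κq) (hp : -1 < p) (hq : -1 < q) (hw : ⟪w, h⟫ ≤ L * ‖h‖ ^ 2) :
    ⟪h - lam • w, fxtField κp κq p q h⟫
      ≤ -((1 - lam * L) * (κp * ‖h‖ ^ (1 + p) + κq * ‖h‖ ^ (1 + q))) := by
  set c := κp / ‖h‖ ^ (1 - p) + κq * ‖h‖ ^ (q - 1)
  have hc : 0 ≤ c := by positivity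
  have hdescent : (1 - lam * L) * ‖h‖ ^ 2 ≤ ⟪h - lam • w, h⟫ := by
    rw [inner_sub_left, real_inner_smul_left, real_inner_self_eq_norm_sq]
    nlinarith [mul_le_mul_of_nonneg_left hw hlam]
  rw [fxtField_eq_neg_smul, inner_neg_right, real_inner_smul_right, neg_le_neg_iff,
    ← fxt_gain_mul_sq κp κq (norm_nonneg h) hp hq]
  calc (1 - lam * L) * (c * ‖h‖ ^ 2) = c * ((1 - lam * L) * ‖h‖ ^ 2) := by ring
    _ ≤ c * ⟪h - lam • w, h⟫ := mul_le_mul_of_nonneg_left hdescent hc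

theorem mul_inner_sub_smul_fxtField_le {h w : E} {k v lam L κp κq p q : ℝ} (hk : 0 ≤ k)
    (hlam : 0 ≤ lam) (hL : 0 ≤ 1 - lam * L) (hκp : 0 ≤ κp) (hκq : 0 ≤ κq) (hp : -1 < p)
    (hq : -1 < q) (hw : ⟪w, h⟫ ≤ L * ‖h‖ ^ 2) (hv0 : 0 ≤ v) (hv : v ≤ ‖h‖ ^ 2) :
    k * ⟪h - lam • w, fxtField κp κq p q h⟫
      ≤ -(k * (1 - lam * L) * κp) * v ^ ((1 + p) / 2)
        - k * (1 - lam * L) * κq * v ^ ((1 + q) / 2) := by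
  have hinner := mul_le_mul_of_nonneg_left
    (inner_sub_smul_fxtField_le hlam hκp hκq hp hq hw) hk
  have hvp := mul_le_mul_of_nonneg_left
    (rpow_half_le_rpow_of_le_sq (e := 1 + p) hv0 (norm_nonneg h) (by linarith) hv)
    (by positivity : 0 ≤ k * (1 - lam * L) * κp)
  have hvq := mul_le_mul_of_nonneg_left
    (rpow_half_le_rpow_of_le_sq (e := 1 + q) hv0 (norm_nonneg h) (by linarith) hv)
    (by positivity : 0 ≤ k * (1 - lam * L) * κq)
  linarith

end FixedTimeField

theorem fxt_settlingTime_eq (m a κp κq p q : ℝ) :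
    1 / (2 * m * a * κp * (1 - (1 + p) / 2)) + 1 / (2 * m * a * κq * ((1 + q) / 2 - 1))
      = 1 / (m * a) * (1 / (κp * (1 - p)) + 1 / (κq * (q - 1))) := by
  rw [show 2 * m * a * κp * (1 - (1 + p) / 2) = m * a * (κp * (1 - p)) by ring,
    show 2 * m * a * κq * ((1 + q) / 2 - 1) = m * a * (κq * (q - 1)) by ring]
  simp only [one_div, mul_inv, mul_add]

theorem fxt_proximal_gradient_flow_general
    {n : ℕ} (Lf lam μ κp κq p q : ℝ)
    (hLf : 0 < Lf) (hlam : lam ∈ Set.Ioo (0:ℝ) (1 / Lf)) (hμ : 0 < μ)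
    (hκp : 0 < κp) (hκq : 0 < κq) (hp : p ∈ Set.Ico (0:ℝ) 1) (hq : 1 < q)
    (f : EuclideanSpace ℝ (Fin n) → ℝ)
    (hHess : ∀ z h, ⟪fderiv ℝ (gradient f) z h, h⟫ ≤ Lf * ‖h‖ ^ 2)
    (F : EuclideanSpace ℝ (Fin n) → ℝ) (hF : ContDiff ℝ 1 F)
    (Fstar : ℝ) (hFlb : ∀ z, Fstar ≤ F z)
    (H : EuclideanSpace ℝ (Fin n) → EuclideanSpace ℝ (Fin n))
    (hgradF : ∀ z, gradient F z = H z - lam • fderiv ℝ (gradient f) z (H z))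
    (hPPL : ∀ z, μ * (F z - Fstar) ≤ (1/2) * ‖H z‖ ^ 2)
    (x : ℝ → EuclideanSpace ℝ (Fin n))
    (hx : ∀ t ≥ (0:ℝ), HasDerivAt x
      (-((κp / ‖H (x t)‖ ^ (1 - p)) • H (x t))
        - (κq * ‖H (x t)‖ ^ (q - 1)) • H (x t)) t) :
    ∀ t : ℝ, (1 / (μ * (1 - lam * Lf))) * (1 / (κp * (1 - p)) + 1 / (κq * (q - 1))) ≤ t →
      F (x t) = Fstar := by
  obtain ⟨hlam0, hlamL⟩ := hlam
  obtain ⟨hp0, hp1⟩ := hp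
  have ha : 0 < 1 - lam * Lf := by
    rw [lt_div_iff₀ hLf] at hlamL
    linarith
  set V : ℝ → ℝ := fun t ↦ 2 * μ * (F (x t) - Fstar)
  have hV : ∀ t ≥ (0 : ℝ),
      HasDerivAt V (2 * μ * ⟪gradient F (x t), fxtField κp κq p q (H (x t))⟫) t := by
    intro t ht
    rw [inner_gradient_left]
    exact ((((hF.differentiable one_ne_zero) (x t)).hasFDerivAt.comp_hasDerivAt t
      (hx t ht)).sub_const Fstar).const_mul (2 * μ)
  have hV0 : ∀ t ≥ (0 : ℝ), 0 ≤ V t := fun t _ ↦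
    mul_nonneg (by positivity) (sub_nonneg.2 (hFlb (x t)))
  have hV' : ∀ t ≥ (0 : ℝ), 2 * μ * ⟪gradient F (x t), fxtField κp κq p q (H (x t))⟫
      ≤ -(2 * μ * (1 - lam * Lf) * κp) * V t ^ ((1 + p) / 2)
        - 2 * μ * (1 - lam * Lf) * κq * V t ^ ((1 + q) / 2) := fun t ht ↦ by
    rw [hgradF]
    exact mul_inner_sub_smul_fxtField_le (by positivity) hlam0.le ha.le hκp.le hκq.le
      (by linarith) (by linarith) (hHess _ _) (hV0 t ht) (by linarith [hPPL (x t)])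
  intro t ht
  have hVt := eq_zero_of_hasDerivAt_le_neg_mul_rpow_sub_mul_rpow_s15 (by positivity) (by positivity)
    (by linarith) (by linarith) hV hV0 hV' t ((fxt_settlingTime_eq _ _ _ _ _ _).trans_le ht)
  have := (mul_eq_zero.1 hVt).resolve_left (by positivity)
  linarith

/-- Theorem 5: fixed-time convergence of the FxT proximal gradient flow for
nonsmooth composite optimization, stated via the forward–backward envelope F,
the prox-gradient mapping H, and the proximal Polyak–Łojasiewicz inequality. -/
theorem fxt_proximal_gradient_flow
    {n : ℕ} (Lf lam μ κp κq p q : ℝ)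
    (hLf : 0 < Lf) (hlam : lam ∈ Set.Ioo (0:ℝ) (1 / Lf)) (hμ : 0 < μ)
    (hκp : 0 < κp) (hκq : 0 < κq) (hp : p ∈ Set.Ico (0:ℝ) 1) (hq : 1 < q)
    (f : EuclideanSpace ℝ (Fin n) → ℝ) (hf : ContDiff ℝ 2 f)
    (hHess : ∀ z h, ⟪fderiv ℝ (gradient f) z h, h⟫ ≤ Lf * ‖h‖ ^ 2)
    (F : EuclideanSpace ℝ (Fin n) → ℝ) (hF : ContDiff ℝ 1 F)
    (Fstar : ℝ) (hFatt : ∃ z, F z = Fstar) (hFlb : ∀ z, Fstar ≤ F z)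
    (H : EuclideanSpace ℝ (Fin n) → EuclideanSpace ℝ (Fin n))
    (hgradF : ∀ z, gradient F z = H z - lam • fderiv ℝ (gradient f) z (H z))
    (hPPL : ∀ z, μ * (F z - Fstar) ≤ (1/2) * ‖H z‖ ^ 2)
    (x : ℝ → EuclideanSpace ℝ (Fin n))
    (hx : ∀ t ≥ (0:ℝ), HasDerivAt x
      (-((κp / ‖H (x t)‖ ^ (1 - p)) • H (x t))
        - (κq * ‖H (x t)‖ ^ (q - 1)) • H (x t)) t) :
    ∀ t : ℝ, (1 / (μ * (1 - lam * Lf))) * (1 / (κp * (1 - p)) + 1 / (κq * (q - 1))) ≤ t →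
      F (x t) = Fstar :=
  fxt_proximal_gradient_flow_general Lf lam μ κp κq p q hLf hlam hμ hκp hκq hp hq f hHess F hF Fstar
    hFlb H hgradF hPPL x hx
end
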